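/- arXiv:2204.10479 — 7 statements merged into one kernel-verified Lean document; each statement's English description precedes it below -/
import Mathlib

section
/- Suppose |r(s,a,s')| ≤ 1 for all (s,a,s') and ‖V‖_∞ ≤ 1/(1−γ). Then the TD noise vector w(s,a,s') := e_s·(r(s,a,s') + γ V(s') − V(s)) − (D R^π + γ D P^π V − D V) satisfies the second-moment bound Σ_{s,a,s'} d(s)·π(a|s)·P(s'|s,a)·‖w(s,a,s')‖_2² ≤ 9/(1−γ)². -/
open Finset

/-- The TD noise vector, as a function of the sampled transition `(s, a, s')`:
`w(s,a,s') = e_s·(r(s,a,s') + γV(s') − V(s)) − (D R^π + γ D P^π V − D V)`,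
where `[P^π]_{t u} = ∑ a, π(a|t) P(u|t,a)`, `R^π(t) = ∑_{a,u} π(a|t) P(u|t,a) r(t,a,u)`
and `D = diag(d)`. -/
noncomputable def tdNoise {S A : Type*} [Fintype S] [Fintype A] [DecidableEq S]
    (γ : ℝ) (π : S → A → ℝ) (P : S → A → S → ℝ) (r : S → A → S → ℝ)
    (d : S → ℝ) (V : S → ℝ) (s : S) (a : A) (s' : S) : S → ℝ :=
  fun t =>
    (if t = s then 1 else 0) * (r s a s' + γ * V s' - V s) -
      (d t * (∑ b, ∑ u, π t b * P t b u * r t b u) +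
        γ * (d t * ∑ u, (∑ b, π t b * P t b u) * V u) - d t * V t)

/-- **Second-moment bound of the TD noise.**  If `|r(s,a,s')| ≤ 1` and `‖V‖_∞ ≤ 1/(1−γ)`
(here `‖V‖` is the sup norm on `S → ℝ`), then
`∑_{s,a,s'} d(s) π(a|s) P(s'|s,a) · ‖w(s,a,s')‖₂² ≤ 9/(1−γ)²`, where
`‖x‖₂² = ∑ t, x(t)²` is the squared Euclidean norm. -/
theorem tdNoise_second_moment_bound
    {S A : Type*} [Fintype S] [Nonempty S] [DecidableEq S] [Fintype A]
    (γ : ℝ) (hγ0 : 0 ≤ γ) (hγ1 : γ < 1)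
    (π : S → A → ℝ) (hπ0 : ∀ s a, 0 ≤ π s a) (hπ1 : ∀ s, ∑ a, π s a = 1)
    (P : S → A → S → ℝ) (hP0 : ∀ s a s', 0 ≤ P s a s') (hP1 : ∀ s a, ∑ s', P s a s' = 1)
    (r : S → A → S → ℝ) (hr : ∀ s a s', |r s a s'| ≤ 1)
    (d : S → ℝ) (hd : ∀ s, 0 < d s) (hd1 : ∑ s, d s = 1)
    (V : S → ℝ) (hV : ‖V‖ ≤ 1 / (1 - γ)) :
    (∑ s : S, ∑ a : A, ∑ s' : S,
        d s * π s a * P s a s' * (∑ t, (tdNoise γ π P r d V s a s' t) ^ 2)) ≤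
      9 / (1 - γ) ^ 2 := by
  set c := 1 / (1 - γ) with hc
  have h1γ : 0 < 1 - γ := by linarith
  have hc1 : 1 ≤ c := by rw [hc, le_div_iff₀ h1γ]; linarith
  have hc0 : 0 < c := lt_of_lt_of_le one_pos hc1
  set δ : S → A → S → ℝ := fun s a s' => r s a s' + γ * V s' - V s with hδ
  set μ : S → ℝ := fun t => d t * (∑ b, ∑ u, π t b * P t b u * r t b u) +
        γ * (d t * ∑ u, (∑ b, π t b * P t b u) * V u) - d t * V t with hμ
  set M : ℝ := ∑ t, μ t * μ t with hM
  have hVb : ∀ s, |V s| ≤ c := fun s => le_trans (norm_le_pi_norm V s) hV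
  have hδb : ∀ s a s', |δ s a s'| ≤ 3 * c := by
    intro s a s'
    have h1 := hr s a s'
    have h2 := hVb s
    have h3 := hVb s'
    have habs : |δ s a s'| ≤ |r s a s'| + γ * |V s'| + |V s| := by
      have h5 : |δ s a s'| ≤ |r s a s' + γ * V s'| + |V s| := abs_sub _ _
      have h4 : |r s a s' + γ * V s'| ≤ |r s a s'| + |γ * V s'| := abs_add_le _ _
      rw [abs_mul, abs_of_nonneg hγ0] at h4
      linarith
    have : γ * |V s'| ≤ 1 * c :=
      mul_le_mul (le_of_lt hγ1) h3 (abs_nonneg _) zero_le_one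
    linarith
  have hmass : ∀ s, ∑ a, ∑ s', d s * π s a * P s a s' = d s := by
    intro s
    simp only [mul_assoc, ← Finset.mul_sum, hP1, mul_one, hπ1]
  have hinner : ∀ s, (∑ a, ∑ s', d s * π s a * P s a s' * δ s a s') = μ s := by
    intro s
    have e1 : ∑ a, ∑ s', d s * π s a * P s a s' * r s a s'
        = d s * ∑ b, ∑ u, π s b * P s b u * r s b u := by
      simp only [Finset.mul_sum]; congr 1; ext a; congr 1; ext u; ring
    have e2 : ∑ a, ∑ s', d s * π s a * P s a s' * V s'
        = d s * ∑ u, (∑ b, π s b * P s b u) * V u := by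
      rw [Finset.sum_comm]
      simp only [Finset.mul_sum, Finset.sum_mul]
      congr 1; ext u; congr 1; ext a; ring
    have e3 : ∑ a, ∑ s', d s * π s a * P s a s' * V s = d s * V s := by
      simp only [← Finset.sum_mul]
      rw [hmass]
    calc (∑ a, ∑ s', d s * π s a * P s a s' * δ s a s')
        = (∑ a, ∑ s', (d s * π s a * P s a s' * r s a s'
            + γ * (d s * π s a * P s a s' * V s')
            - d s * π s a * P s a s' * V s)) := by
          apply Finset.sum_congr rfl; intro a _
          apply Finset.sum_congr rfl; intro u _
          simp only [hδ]; ring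
      _ = (∑ a, ∑ s', d s * π s a * P s a s' * r s a s')
            + γ * (∑ a, ∑ s', d s * π s a * P s a s' * V s')
            - (∑ a, ∑ s', d s * π s a * P s a s' * V s) := by
          simp only [Finset.sum_sub_distrib, Finset.sum_add_distrib, Finset.mul_sum]
      _ = μ s := by rw [e1, e2, e3]
  have stepA : ∀ s a s', (∑ t, (tdNoise γ π P r d V s a s' t) ^ 2)
      = δ s a s' * δ s a s' - 2 * δ s a s' * μ s + M := by
    intro s a s'
    have h : ∀ t, (tdNoise γ π P r d V s a s' t) ^ 2
        = (if t = s then δ s a s' * δ s a s' - 2 * δ s a s' * μ t else 0) + μ t * μ t := by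
      intro t
      by_cases h : t = s
      · simp only [tdNoise, if_pos h, hδ, hμ]; ring
      · simp only [tdNoise, if_neg h, hδ, hμ]; ring
    rw [Finset.sum_congr rfl (fun t _ => h t), Finset.sum_add_distrib,
      Finset.sum_ite_eq' univ s, if_pos (mem_univ s), hM]
  have split : ∀ s, (∑ a, ∑ s', d s * π s a * P s a s' *
        (δ s a s' * δ s a s' - 2 * δ s a s' * μ s + M))
      = (∑ a, ∑ s', d s * π s a * P s a s' * (δ s a s' * δ s a s'))
          - 2 * (μ s * μ s) + M * d s := by
    intro s
    calc (∑ a, ∑ s', d s * π s a * P s a s' *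
            (δ s a s' * δ s a s' - 2 * δ s a s' * μ s + M))
        = ∑ a, ∑ s', (d s * π s a * P s a s' * (δ s a s' * δ s a s')
            - 2 * μ s * (d s * π s a * P s a s' * δ s a s')
            + M * (d s * π s a * P s a s')) := by
          apply Finset.sum_congr rfl; intro a _
          apply Finset.sum_congr rfl; intro u _
          ring
      _ = (∑ a, ∑ s', d s * π s a * P s a s' * (δ s a s' * δ s a s'))
            - 2 * μ s * (∑ a, ∑ s', d s * π s a * P s a s' * δ s a s')
            + M * (∑ a, ∑ s', d s * π s a * P s a s') := by
          simp only [Finset.sum_sub_distrib, Finset.sum_add_distrib, Finset.mul_sum]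
      _ = _ := by rw [hinner, hmass]; ring
  have hMnn : 0 ≤ M := Finset.sum_nonneg fun t _ => mul_self_nonneg _
  have hbound : (∑ s, ∑ a, ∑ s', d s * π s a * P s a s' * (δ s a s' * δ s a s'))
      ≤ 9 * (c * c) := by
    have hterm : ∀ s, (∑ a, ∑ s', d s * π s a * P s a s' * (δ s a s' * δ s a s'))
        ≤ d s * (9 * (c * c)) := by
      intro s
      have h1 : (∑ a, ∑ s', d s * π s a * P s a s' * (δ s a s' * δ s a s'))
          ≤ ∑ a, ∑ s', d s * π s a * P s a s' * (9 * (c * c)) := by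
        apply Finset.sum_le_sum; intro a _
        apply Finset.sum_le_sum; intro u _
        apply mul_le_mul_of_nonneg_left _
          (mul_nonneg (mul_nonneg (le_of_lt (hd s)) (hπ0 s a)) (hP0 s a u))
        nlinarith [hδb s a u, abs_nonneg (δ s a u), sq_abs (δ s a u)]
      have h2 : (∑ a, ∑ s', d s * π s a * P s a s' * (9 * (c * c)))
          = d s * (9 * (c * c)) := by
        simp only [← Finset.sum_mul]; rw [hmass]
      linarith [h1, h2.le]
    calc (∑ s, ∑ a, ∑ s', d s * π s a * P s a s' * (δ s a s' * δ s a s'))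
        ≤ ∑ s, d s * (9 * (c * c)) := Finset.sum_le_sum fun s _ => hterm s
      _ = 9 * (c * c) := by rw [← Finset.sum_mul, hd1, one_mul]
  have hfinal : (9 : ℝ) * (c * c) = 9 / (1 - γ) ^ 2 := by
    rw [hc]; field_simp
  calc (∑ s : S, ∑ a : A, ∑ s' : S,
        d s * π s a * P s a s' * (∑ t, (tdNoise γ π P r d V s a s' t) ^ 2))
      = ∑ s, ∑ a, ∑ s', d s * π s a * P s a s' *
          (δ s a s' * δ s a s' - 2 * δ s a s' * μ s + M) := by
        apply Finset.sum_congr rfl; intro s _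
        apply Finset.sum_congr rfl; intro a _
        apply Finset.sum_congr rfl; intro u _
        rw [stepA]
    _ = ∑ s, ((∑ a, ∑ s', d s * π s a * P s a s' * (δ s a s' * δ s a s'))
          - 2 * (μ s * μ s) + M * d s) :=
        Finset.sum_congr rfl fun s _ => split s
    _ = (∑ s, ∑ a, ∑ s', d s * π s a * P s a s' * (δ s a s' * δ s a s'))
          - 2 * M + M * 1 := by
        simp only [Finset.sum_sub_distrib, Finset.sum_add_distrib, ← Finset.mul_sum,
          ← hM, hd1]
    _ ≤ 9 * (c * c) := by linarith [hbound]
    _ = 9 / (1 - γ) ^ 2 := hfinal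
end

section
/- Suppose |r(s,a,s')| ≤ 1 for all (s,a,s') and ‖V‖_∞ ≤ 1/(1−γ). Let w(s,a,s') := e_s·(r(s,a,s') + γ V(s') − V(s)) − (D R^π + γ D P^π V − D V) and define the covariance matrix W := Σ_{s,a,s'} d(s)·π(a|s)·P(s'|s,a)·w(s,a,s')·w(s,a,s')^T. Then W is symmetric positive semidefinite and its maximum eigenvalue satisfies λ_max(W) ≤ 9/(1−γ)². -/
open Finset Matrix

/-- The largest eigenvalue of a real matrix: the supremum of the set of its real
eigenvalues.  For a real symmetric matrix this is the usual `λ_max`. -/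
noncomputable def lamMax {S : Type*} [Fintype S] (M : Matrix S S ℝ) : ℝ :=
  sSup {μ : ℝ | ∃ v : S → ℝ, v ≠ 0 ∧ M.mulVec v = μ • v}

/-!
Write `δ = r(s,a,s') + γV(s') − V(s)` for the TD error and sample `s ∼ d`, `a ∼ π(·|s)`,
`s' ∼ P(·|s,a)`. Then `w = δ e_s − E[δ e_s]` is a centred random vector and `W = E[w wᵀ]`,
a nonnegative combination of rank-one matrices `w wᵀ`: it is positive semidefinite and its
largest eigenvalue is at most its trace `E‖w‖²`. Centring only lowers the second moment, so
`E‖w‖² ≤ E[δ²] ≤ (2/(1−γ))²`, as `|δ| ≤ 1 + γ/(1−γ) + 1/(1−γ)`.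
-/

section Covariance

variable {S I : Type*} [Fintype S] [Fintype I]

theorem Matrix.PosSemidef.le_trace_of_mulVec_eq_smul {M : Matrix S S ℝ} (hM : M.PosSemidef)
    {μ : ℝ} {v : S → ℝ} (hv : v ≠ 0) (h : M *ᵥ v = μ • v) : μ ≤ M.trace := by
  classical
  have hμ : μ ∈ spectrum ℝ M := by
    rw [← Matrix.spectrum_toLin']
    exact (Module.End.hasEigenvalue_of_hasEigenvector
      ⟨Module.End.mem_eigenspace_iff.2 h, hv⟩).mem_spectrum
  obtain ⟨i, rfl⟩ := hM.1.spectrum_real_eq_range_eigenvalues ▸ hμ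
  rw [hM.1.trace_eq_sum_eigenvalues]
  simpa using single_le_sum (fun j _ => hM.eigenvalues_nonneg j) (mem_univ i)

theorem lamMax_le_trace {M : Matrix S S ℝ} (hM : M.PosSemidef) : lamMax M ≤ M.trace :=
  Real.sSup_le (fun _ ⟨_, hv, h⟩ => hM.le_trace_of_mulVec_eq_smul hv h) hM.trace_nonneg

theorem posSemidef_sum_smul_vecMulVec_self {c : I → ℝ} (hc : ∀ k, 0 ≤ c k) (w : I → S → ℝ) :
    (∑ k, c k • vecMulVec (w k) (w k)).PosSemidef :=
  posSemidef_sum _ fun k _ => by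
    simpa using (posSemidef_vecMulVec_self_star (w k)).smul (hc k)

theorem trace_sum_smul_vecMulVec_self (c : I → ℝ) (w : I → S → ℝ) :
    (∑ k, c k • vecMulVec (w k) (w k)).trace = ∑ k, c k * (w k ⬝ᵥ w k) := by
  simp [trace_sum, trace_vecMulVec]

theorem sum_mul_dotProduct_sub_weightedMean {R : Type*} [CommRing R] {c : I → R}
    (hc : ∑ k, c k = 1) (X : I → S → R) :
    ∑ k, c k * ((X k - ∑ j, c j • X j) ⬝ᵥ (X k - ∑ j, c j • X j)) =
      ∑ k, c k * (X k ⬝ᵥ X k) - (∑ j, c j • X j) ⬝ᵥ (∑ j, c j • X j) := by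
  set m := ∑ j, c j • X j
  have hm : ∑ k, c k * (X k ⬝ᵥ m) = m ⬝ᵥ m := by
    simp [m, sum_dotProduct, smul_dotProduct]
  have hterm : ∀ k, c k * ((X k - m) ⬝ᵥ (X k - m)) =
      c k * (X k ⬝ᵥ X k) - 2 * (c k * (X k ⬝ᵥ m)) + c k * (m ⬝ᵥ m) := fun k => by
    simp only [sub_dotProduct, dotProduct_sub, dotProduct_comm m (X k)]; ring
  simp only [hterm, sum_add_distrib, sum_sub_distrib, ← mul_sum, ← sum_mul, hm, hc]
  ring

theorem sum_mul_dotProduct_sub_weightedMean_le {c : I → ℝ} (hc : ∑ k, c k = 1)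
    (X : I → S → ℝ) :
    ∑ k, c k * ((X k - ∑ j, c j • X j) ⬝ᵥ (X k - ∑ j, c j • X j)) ≤ ∑ k, c k * (X k ⬝ᵥ X k) := by
  rw [sum_mul_dotProduct_sub_weightedMean hc]
  simpa using dotProduct_self_star_nonneg (∑ j, c j • X j)

end Covariance

def tdError {S A : Type*} (γ : ℝ) (r : S → A → S → ℝ) (V : S → ℝ) (s : S) (a : A) (s' : S) :
    ℝ :=
  r s a s' + γ * V s' - V s

def transitionProb {S A : Type*} (d : S → ℝ) (π : S → A → ℝ) (P : S → A → S → ℝ)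
    (k : S × A × S) : ℝ :=
  d k.1 * π k.1 k.2.1 * P k.1 k.2.1 k.2.2

theorem transitionProb_nonneg {S A : Type*} {d : S → ℝ} {π : S → A → ℝ} {P : S → A → S → ℝ}
    (hd : ∀ s, 0 ≤ d s) (hπ0 : ∀ s a, 0 ≤ π s a) (hP0 : ∀ s a s', 0 ≤ P s a s')
    (k : S × A × S) : 0 ≤ transitionProb d π P k :=
  mul_nonneg (mul_nonneg (hd _) (hπ0 _ _)) (hP0 _ _ _)

theorem abs_tdError_le {S A : Type*} [Fintype S] {γ : ℝ} (hγ0 : 0 ≤ γ) (hγ1 : γ < 1)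
    {r : S → A → S → ℝ} (hr : ∀ s a s', |r s a s'| ≤ 1) {V : S → ℝ} (hV : ‖V‖ ≤ 1 / (1 - γ))
    (s : S) (a : A) (s' : S) : |tdError γ r V s a s'| ≤ 2 / (1 - γ) := by
  have hVs : ∀ t, |V t| ≤ 1 / (1 - γ) := fun t => (norm_le_pi_norm V t).trans hV
  have hγ : 1 - γ ≠ 0 := by linarith
  calc |tdError γ r V s a s'| ≤ |r s a s'| + |γ * V s'| + |V s| :=
        (abs_sub _ _).trans (add_le_add_left (abs_add_le _ _) _)
    _ = |r s a s'| + γ * |V s'| + |V s| := by rw [abs_mul, abs_of_nonneg hγ0]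
    _ ≤ 1 + γ * (1 / (1 - γ)) + 1 / (1 - γ) := by gcongr; exacts [hr s a s', hVs s', hVs s]
    _ = 2 / (1 - γ) := by field_simp; ring

section Sampling

variable {S A : Type*} [Fintype S] [Fintype A] {d : S → ℝ} {π : S → A → ℝ} {P : S → A → S → ℝ}

theorem sum_transitionProb (hπ1 : ∀ s, ∑ a, π s a = 1) (hP1 : ∀ s a, ∑ s', P s a s' = 1)
    (hd1 : ∑ s, d s = 1) : ∑ k, transitionProb d π P k = 1 := by
  simp [transitionProb, Fintype.sum_prod_type, mul_assoc, ← mul_sum, hP1, hπ1, hd1]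

theorem sum_transitionProb_mul_tdError (hπ1 : ∀ s, ∑ a, π s a = 1)
    (hP1 : ∀ s a, ∑ s', P s a s' = 1) (γ : ℝ) (r : S → A → S → ℝ) (V : S → ℝ) (s : S) :
    ∑ a, ∑ s', d s * π s a * P s a s' * tdError γ r V s a s' =
      d s * (∑ b, ∑ u, π s b * P s b u * r s b u) +
        γ * (d s * ∑ u, (∑ b, π s b * P s b u) * V u) - d s * V s := by
  have hPV : ∑ a, ∑ s', d s * π s a * P s a s' * V s' =
      d s * ∑ u, (∑ b, π s b * P s b u) * V u := by
    rw [sum_comm, mul_sum]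
    exact sum_congr rfl fun u _ => by
      rw [sum_mul, mul_sum]; exact sum_congr rfl fun b _ => by ring
  have hterm : ∀ a s', d s * π s a * P s a s' * tdError γ r V s a s' =
      d s * (π s a * P s a s' * r s a s') + γ * (d s * π s a * P s a s' * V s') -
        d s * π s a * P s a s' * V s := fun a s' => by unfold tdError; ring
  simp only [hterm, sum_add_distrib, sum_sub_distrib, ← mul_sum, ← sum_mul, hPV, hP1, hπ1, mul_one]

theorem tdNoise_eq_single_sub_mean [DecidableEq S] (hπ1 : ∀ s, ∑ a, π s a = 1)
    (hP1 : ∀ s a, ∑ s', P s a s' = 1) (γ : ℝ) (r : S → A → S → ℝ) (V : S → ℝ)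
    (s : S) (a : A) (s' : S) :
    tdNoise γ π P r d V s a s' = Pi.single s (tdError γ r V s a s') -
      ∑ k, transitionProb d π P k • Pi.single k.1 (tdError γ r V k.1 k.2.1 k.2.2) := by
  funext t
  simp [tdNoise, tdError, Pi.single_apply, Fintype.sum_prod_type, transitionProb,
    ← sum_transitionProb_mul_tdError hπ1 hP1]

end Sampling

theorem tdNoise_covariance_bound_general
    {S A : Type*} [Fintype S] [DecidableEq S] [Fintype A]
    (γ : ℝ) (hγ0 : 0 ≤ γ) (hγ1 : γ < 1)
    (π : S → A → ℝ) (hπ0 : ∀ s a, 0 ≤ π s a) (hπ1 : ∀ s, ∑ a, π s a = 1)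
    (P : S → A → S → ℝ) (hP0 : ∀ s a s', 0 ≤ P s a s') (hP1 : ∀ s a, ∑ s', P s a s' = 1)
    (r : S → A → S → ℝ) (hr : ∀ s a s', |r s a s'| ≤ 1)
    (d : S → ℝ) (hd : ∀ s, 0 < d s) (hd1 : ∑ s, d s = 1)
    (V : S → ℝ) (hV : ‖V‖ ≤ 1 / (1 - γ))
    (W : Matrix S S ℝ)
    (hW : W = Matrix.of fun i j => ∑ s : S, ∑ a : A, ∑ s' : S,
        d s * π s a * P s a s' *
          (tdNoise γ π P r d V s a s' i * tdNoise γ π P r d V s a s' j)) :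
    W.PosSemidef ∧ lamMax W ≤ 9 / (1 - γ) ^ 2 := by
  set c := transitionProb d π P
  set δ : S × A × S → ℝ := fun k => tdError γ r V k.1 k.2.1 k.2.2
  set w : S × A × S → S → ℝ := fun k => tdNoise γ π P r d V k.1 k.2.1 k.2.2
  have hW' : W = ∑ k, c k • vecMulVec (w k) (w k) := by
    ext i j
    simp [hW, c, w, transitionProb, Fintype.sum_prod_type, Matrix.sum_apply, vecMulVec_apply]
  have hc0 : ∀ k, 0 ≤ c k := transitionProb_nonneg (fun s => (hd s).le) hπ0 hP0
  have hc1 : ∑ k, c k = 1 := sum_transitionProb hπ1 hP1 hd1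
  have hPSD : W.PosSemidef := hW' ▸ posSemidef_sum_smul_vecMulVec_self hc0 w
  have hw : w = fun k => Pi.single k.1 (δ k) - ∑ j, c j • Pi.single j.1 (δ j) :=
    funext fun k => tdNoise_eq_single_sub_mean hπ1 hP1 γ r V k.1 k.2.1 k.2.2
  have hδ : ∀ k, δ k ^ 2 ≤ (2 / (1 - γ)) ^ 2 := fun k => by
    simpa [sq_abs] using pow_le_pow_left₀ (abs_nonneg _) (abs_tdError_le hγ0 hγ1 hr hV _ _ _) 2
  refine ⟨hPSD, (lamMax_le_trace hPSD).trans ?_⟩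
  calc W.trace = ∑ k, c k * (w k ⬝ᵥ w k) := by rw [hW', trace_sum_smul_vecMulVec_self]
    _ ≤ ∑ k, c k * (Pi.single k.1 (δ k) ⬝ᵥ Pi.single k.1 (δ k)) := by
        rw [hw]; exact sum_mul_dotProduct_sub_weightedMean_le hc1 _
    _ ≤ ∑ k, c k * (2 / (1 - γ)) ^ 2 := by
        gcongr with k
        · exact hc0 k
        · simpa [sq] using hδ k
    _ = 4 / (1 - γ) ^ 2 := by rw [← sum_mul, hc1, div_pow]; norm_num
    _ ≤ 9 / (1 - γ) ^ 2 := by gcongr; norm_num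

/-- **Covariance bound of the TD noise.**  If `|r(s,a,s')| ≤ 1` and `‖V‖_∞ ≤ 1/(1−γ)`
(here `‖V‖` is the sup norm on `S → ℝ`), then the covariance matrix
`W = ∑_{s,a,s'} d(s) π(a|s) P(s'|s,a) · w(s,a,s') w(s,a,s')ᵀ` is symmetric positive
semidefinite, and its maximum eigenvalue satisfies `λ_max(W) ≤ 9/(1−γ)²`. -/
theorem tdNoise_covariance_bound
    {S A : Type*} [Fintype S] [Nonempty S] [DecidableEq S] [Fintype A]
    (γ : ℝ) (hγ0 : 0 ≤ γ) (hγ1 : γ < 1)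
    (π : S → A → ℝ) (hπ0 : ∀ s a, 0 ≤ π s a) (hπ1 : ∀ s, ∑ a, π s a = 1)
    (P : S → A → S → ℝ) (hP0 : ∀ s a s', 0 ≤ P s a s') (hP1 : ∀ s a, ∑ s', P s a s' = 1)
    (r : S → A → S → ℝ) (hr : ∀ s a s', |r s a s'| ≤ 1)
    (d : S → ℝ) (hd : ∀ s, 0 < d s) (hd1 : ∑ s, d s = 1)
    (V : S → ℝ) (hV : ‖V‖ ≤ 1 / (1 - γ))
    (W : Matrix S S ℝ)
    (hW : W = Matrix.of fun i j => ∑ s : S, ∑ a : A, ∑ s' : S,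
        d s * π s a * P s a s' *
          (tdNoise γ π P r d V s a s' i * tdNoise γ π P r d V s a s' j)) :
    W.PosSemidef ∧ lamMax W ≤ 9 / (1 - γ) ^ 2 :=
  tdNoise_covariance_bound_general γ hγ0 hγ1 π hπ0 hπ1 P hP0 hP1 r hr d hd hd1 V hV W hW
end

section
/- Let α ∈ (0,1), γ ∈ [0,1), let d : S → ℝ be a probability distribution with d(s) > 0 for all s, let D be the diagonal matrix with diagonal entries d(s), and let P be any n×n row-stochastic matrix with nonnegative entries. Define the system matrix A = I + α(γ D P − D) and ρ = 1 − α·d_min·(1−γ), where d_min = min_s d(s). Then ‖A‖_∞ ≤ ρ, where ‖A‖_∞ := max_i Σ_j |[A]_{ij}| is the maximum-absolute-row-sum matrix norm; in particular ρ ∈ (0,1). -/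
open Finset Matrix

/-- The maximum-absolute-row-sum matrix norm `‖A‖_∞ = max_i ∑_j |A i j|`. -/
noncomputable def matInfNorm {S : Type*} [Fintype S] (A : Matrix S S ℝ) : ℝ :=
  ⨆ i : S, ∑ j : S, |A i j|

/-- **Row-sum norm bound for the TD system matrix.**  Let `α ∈ (0,1)`, `γ ∈ [0,1)`,
`d` a probability distribution on the finite nonempty state space `S` with `d(s) > 0`
for all `s`, `D = diag(d)`, and `P` any row-stochastic matrix with nonnegative entries.
With `A = I + α(γ D P − D)` and `ρ = 1 − α·d_min·(1−γ)` where `d_min = min_s d(s)`,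
we have `‖A‖_∞ ≤ ρ`; in particular `ρ ∈ (0,1)`. -/
theorem td_system_matrix_infNorm_le
    {S : Type*} [Fintype S] [Nonempty S] [DecidableEq S]
    (γ α : ℝ) (hγ0 : 0 ≤ γ) (hγ1 : γ < 1) (hα0 : 0 < α) (hα1 : α < 1)
    (d : S → ℝ) (hd : ∀ s, 0 < d s) (hd1 : ∑ s, d s = 1)
    (P : Matrix S S ℝ) (hP0 : ∀ i j, 0 ≤ P i j) (hP1 : ∀ i, ∑ j, P i j = 1)
    (A : Matrix S S ℝ)
    (hA : A = 1 + α • (γ • (Matrix.diagonal d * P) - Matrix.diagonal d))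
    (ρ : ℝ) (hρ : ρ = 1 - α * (⨅ s : S, d s) * (1 - γ)) :
    matInfNorm A ≤ ρ ∧ 0 < ρ ∧ ρ < 1 := by
  -- facts about d
  have hd1' : ∀ s, d s ≤ 1 := by
    intro s
    calc d s ≤ ∑ t, d t :=
          Finset.single_le_sum (fun t _ => (hd t).le) (Finset.mem_univ s)
      _ = 1 := hd1
  obtain ⟨s0, hs0⟩ := Finite.exists_min d
  have hbdd : BddBelow (Set.range d) := (Set.finite_range d).bddBelow
  have hmin_ge : d s0 ≤ ⨅ s : S, d s := le_ciInf hs0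
  have hmin_le : (⨅ s : S, d s) ≤ d s0 := ciInf_le hbdd s0
  have hmin_pos : 0 < ⨅ s : S, d s := lt_of_lt_of_le (hd s0) hmin_ge
  have hmin_le1 : (⨅ s : S, d s) ≤ 1 := hmin_le.trans (hd1' s0)
  have hγ' : 0 < 1 - γ := by linarith
  -- entries of A
  have hAe : ∀ i j, A i j = (if i = j then 1 else 0) + α * (γ * (d i * P i j) -
      (if i = j then d i else 0)) := by
    intro i j
    simp [hA, Matrix.add_apply, Matrix.sub_apply, Matrix.smul_apply, Matrix.one_apply,
      Matrix.diagonal_mul, Matrix.diagonal_apply, smul_eq_mul]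
  have hentry_nonneg : ∀ i j, 0 ≤ A i j := by
    intro i j
    rw [hAe i j]
    by_cases h : i = j
    · simp only [h, if_true, eq_self_iff_true]
      have h1 : 0 ≤ γ * (d j * P j j) := mul_nonneg hγ0 (mul_nonneg (hd j).le (hP0 j j))
      have h2 : α * d j ≤ 1 * 1 :=
        mul_le_mul hα1.le (hd1' j) (hd j).le zero_le_one
      nlinarith [mul_nonneg hα0.le h1]
    · simp only [if_neg h]
      have : 0 ≤ γ * (d i * P i j) := mul_nonneg hγ0 (mul_nonneg (hd i).le (hP0 i j))
      nlinarith
  -- row sums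
  have hrow : ∀ i, ∑ j, |A i j| = 1 - α * d i * (1 - γ) := by
    intro i
    have : ∑ j, |A i j| = ∑ j, A i j :=
      Finset.sum_congr rfl fun j _ => abs_of_nonneg (hentry_nonneg i j)
    rw [this]
    have h2 : ∀ j, A i j = (if i = j then (1 - α * d i) else 0) + α * γ * d i * P i j := by
      intro j
      rw [hAe i j]
      by_cases h : i = j <;> simp [h] <;> ring
    rw [Finset.sum_congr rfl fun j _ => h2 j, Finset.sum_add_distrib, ← Finset.mul_sum,
      hP1 i, Finset.sum_ite_eq]
    simp
    ring
  have hrow_le : ∀ i, ∑ j, |A i j| ≤ ρ := by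
    intro i
    rw [hrow i, hρ]
    have hle : (⨅ s : S, d s) ≤ d i := hmin_le.trans (hs0 i)
    have := mul_le_mul_of_nonneg_right (mul_le_mul_of_nonneg_left hle hα0.le) hγ'.le
    linarith
  refine ⟨ciSup_le hrow_le, ?_, ?_⟩
  · rw [hρ]
    have h1 : α * (⨅ s : S, d s) * (1 - γ) ≤ α * (⨅ s : S, d s) := by
      nlinarith [mul_nonneg (mul_nonneg hα0.le hmin_pos.le) hγ0]
    have h2 : α * (⨅ s : S, d s) ≤ α := by
      nlinarith [mul_le_mul_of_nonneg_left hmin_le1 hα0.le]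
    linarith
  · rw [hρ]
    have : 0 < α * (⨅ s : S, d s) * (1 - γ) :=
      mul_pos (mul_pos hα0 hmin_pos) hγ'
    linarith
end

section
/- Let α ∈ (0,1), γ ∈ [0,1), let d : S → ℝ be a probability distribution with d(s) > 0 for all s, let D be the diagonal matrix with diagonal entries d(s), and let P be any n×n row-stochastic matrix with nonnegative entries. Define A = I + α(γ D P − D) and ρ = 1 − α·d_min·(1−γ) with d_min = min_s d(s). Then for every x_0 ∈ ℝ^S and every k ≥ 0, ‖A^k x_0‖_∞ ≤ ρ^k ‖x_0‖_∞. -/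
open Finset Matrix

/-- **Exponential contraction of the TD system matrix in the sup norm.**  Let `α ∈ (0,1)`,
`γ ∈ [0,1)`, `d` a probability distribution on the finite nonempty state space `S` with
`d(s) > 0` for all `s`, `D = diag(d)`, and `P` any row-stochastic matrix with nonnegative
entries.  With `A = I + α(γ D P − D)` and `ρ = 1 − α·d_min·(1−γ)` where
`d_min = min_s d(s)`, for every `x₀ : S → ℝ` and every `k ≥ 0` we have
`‖A^k x₀‖_∞ ≤ ρ^k ‖x₀‖_∞`, where `‖·‖` on `S → ℝ` is the sup norm. -/
theorem td_system_matrix_pow_contraction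
    {S : Type*} [Fintype S] [Nonempty S] [DecidableEq S]
    (γ α : ℝ) (hγ0 : 0 ≤ γ) (hγ1 : γ < 1) (hα0 : 0 < α) (hα1 : α < 1)
    (d : S → ℝ) (hd : ∀ s, 0 < d s) (hd1 : ∑ s, d s = 1)
    (P : Matrix S S ℝ) (hP0 : ∀ i j, 0 ≤ P i j) (hP1 : ∀ i, ∑ j, P i j = 1)
    (A : Matrix S S ℝ)
    (hA : A = 1 + α • (γ • (Matrix.diagonal d * P) - Matrix.diagonal d))
    (ρ : ℝ) (hρ : ρ = 1 - α * (⨅ s : S, d s) * (1 - γ)) :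
    ∀ (x₀ : S → ℝ) (k : ℕ), ‖(A ^ k).mulVec x₀‖ ≤ ρ ^ k * ‖x₀‖ := by
  set m := ⨅ s : S, d s with hm
  have hdle1 : ∀ s, d s ≤ 1 := by
    intro s
    calc d s ≤ ∑ t, d t := Finset.single_le_sum (fun t _ => (hd t).le) (Finset.mem_univ s)
    _ = 1 := hd1
  have hm_le : ∀ s, m ≤ d s := fun s => ciInf_le (Finite.bddBelow_range _) s
  obtain ⟨s0⟩ := (inferInstance : Nonempty S)
  have hm_pos : 0 < m := by
    obtain ⟨s1, hs1⟩ := Finite.exists_min d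
    exact lt_of_lt_of_le (hd s1) (le_ciInf hs1)
  have hm_le1 : m ≤ 1 := (hm_le s0).trans (hdle1 s0)
  have hρ0 : 0 ≤ ρ := by
    rw [hρ]
    nlinarith [mul_nonneg (mul_nonneg hα0.le hm_pos.le) hγ0,
      mul_nonneg hα0.le (sub_nonneg.2 hm_le1)]
  have key : ∀ x : S → ℝ, ‖A.mulVec x‖ ≤ ρ * ‖x‖ := by
    intro x
    rw [pi_norm_le_iff_of_nonneg (mul_nonneg hρ0 (norm_nonneg x))]
    intro i
    have hxj : ∀ j, |x j| ≤ ‖x‖ := fun j => by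
      simpa [Real.norm_eq_abs] using norm_le_pi_norm x j
    have hAi : A.mulVec x i
        = (1 - α * d i) * x i + α * γ * (d i * ∑ j, P i j * x j) := by
      rw [hA]
      rw [Matrix.add_mulVec, Matrix.smul_mulVec, Matrix.sub_mulVec,
        Matrix.smul_mulVec, Matrix.one_mulVec, ← Matrix.mulVec_mulVec]
      simp only [Pi.add_apply, Pi.smul_apply, Pi.sub_apply, smul_eq_mul,
        Matrix.mulVec_diagonal]
      simp only [Matrix.mulVec, dotProduct]
      ring
    have hsum : |∑ j, P i j * x j| ≤ ‖x‖ := by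
      calc |∑ j, P i j * x j| ≤ ∑ j, |P i j * x j| := Finset.abs_sum_le_sum_abs _ _
      _ ≤ ∑ j, P i j * ‖x‖ := by
          refine Finset.sum_le_sum fun j _ => ?_
          rw [abs_mul, abs_of_nonneg (hP0 i j)]
          exact mul_le_mul_of_nonneg_left (hxj j) (hP0 i j)
      _ = ‖x‖ := by rw [← Finset.sum_mul, hP1 i, one_mul]
    have h1 : 0 ≤ 1 - α * d i := by nlinarith [hd i, hdle1 i]
    have hbound : ‖A.mulVec x i‖ ≤ (1 - α * d i * (1 - γ)) * ‖x‖ := by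
      rw [Real.norm_eq_abs, hAi]
      calc |(1 - α * d i) * x i + α * γ * (d i * ∑ j, P i j * x j)|
          ≤ |(1 - α * d i) * x i| + |α * γ * (d i * ∑ j, P i j * x j)| := abs_add_le _ _
        _ ≤ (1 - α * d i) * ‖x‖ + α * γ * (d i * ‖x‖) := by
            gcongr
            · rw [abs_mul, abs_of_nonneg h1]
              exact mul_le_mul_of_nonneg_left (hxj i) h1
            · rw [abs_mul, abs_mul, abs_mul, abs_of_nonneg hα0.le, abs_of_nonneg hγ0,
                abs_of_nonneg (hd i).le]
              exact mul_le_mul_of_nonneg_left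
                (mul_le_mul_of_nonneg_left hsum (hd i).le) (mul_nonneg hα0.le hγ0)
        _ = (1 - α * d i * (1 - γ)) * ‖x‖ := by ring
    refine hbound.trans ?_
    have : 1 - α * d i * (1 - γ) ≤ ρ := by
      rw [hρ]
      nlinarith [mul_le_mul_of_nonneg_left (hm_le i)
        (mul_nonneg hα0.le (sub_nonneg.2 hγ1.le))]
    exact mul_le_mul_of_nonneg_right this (norm_nonneg x)
  have main : ∀ (k : ℕ) (x : S → ℝ), ‖(A ^ k).mulVec x‖ ≤ ρ ^ k * ‖x‖ := by
    intro k
    induction k with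
    | zero => intro x; simp
    | succ n ih =>
      intro x
      have h2 : (A ^ (n + 1)).mulVec x = (A ^ n).mulVec (A.mulVec x) := by
        rw [pow_succ, ← Matrix.mulVec_mulVec]
      rw [h2, pow_succ]
      calc ‖(A ^ n).mulVec (A.mulVec x)‖ ≤ ρ ^ n * ‖A.mulVec x‖ := ih _
        _ ≤ ρ ^ n * (ρ * ‖x‖) :=
            mul_le_mul_of_nonneg_left (key x) (pow_nonneg hρ0 n)
        _ = ρ ^ n * ρ * ‖x‖ := by ring
  exact fun x₀ k => main k x₀
end

section
/- Let α ∈ (0,1), γ ∈ [0,1), let d : S → ℝ be a probability distribution with d(s) > 0 for all s, D the diagonal matrix of d, P an n×n row-stochastic nonnegative matrix, A = I + α(γ D P − D), and ρ = 1 − α·d_min·(1−γ) with d_min = min_s d(س). Let W_max = 9/(1−γ)², let (W_k) be symmetric positive semidefinite n×n matrices with λ_max(W_k) ≤ W_max for all k, let X_0 be symmetric positive semidefinite, and define X_{k+1} = A X_k A^T + α² W_k. Then for all k ≥ 0, λ_max(X_k) ≤ α² W_max n/(1−ρ) + n λ_max(X_0) ρ^{2k}. -/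
open Finset Matrix

/-!
Work with the entrywise maximum norm `‖X‖ = max |X i j|`. Since `A` is entrywise nonnegative
with row sums at most `ρ`, `‖A X Aᵀ‖ ≤ ρ² ‖X‖`, so `‖X (k+1)‖ ≤ ρ² ‖X k‖ + α² W_max` and
`‖X k‖ ≤ α² W_max / (1 - ρ) + ‖X 0‖ ρ^{2k}`. The two norms are compared by
`‖M‖ ≤ λ_max(M)` for positive semidefinite `M` (as `2 |M i j| ≤ M i i + M j j` and
`M ≤ λ_max(M) • 1`) and `λ_max(M) ≤ n ‖M‖` (Gershgorin).
-/

attribute [local instance] Matrix.normedAddCommGroup Matrix.normedSpace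

section Spectrum

variable {S : Type*} [Fintype S] [DecidableEq S]

theorem lamMax_eq_sSup_spectrum (M : Matrix S S ℝ) : lamMax M = sSup (spectrum ℝ M) := by
  unfold lamMax
  congr 1
  ext μ
  rw [← Matrix.spectrum_toLin', ← Module.End.hasEigenvalue_iff_mem_spectrum,
    Module.End.hasEigenvalue_iff, Submodule.ne_bot_iff]
  simp only [Module.End.mem_eigenspace_iff, toLin'_apply, Set.mem_ofPred_eq, and_comm]

theorem abs_le_card_mul_norm_of_mem_spectrum {M : Matrix S S ℝ} {μ : ℝ}
    (hμ : μ ∈ spectrum ℝ M) : |μ| ≤ Fintype.card S * ‖M‖ := by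
  rw [← Matrix.spectrum_toLin', ← Module.End.hasEigenvalue_iff_mem_spectrum] at hμ
  obtain ⟨k, hk⟩ := eigenvalue_mem_ball hμ
  rw [Metric.mem_closedBall, Real.dist_eq] at hk
  calc |μ| ≤ |M k k| + |μ - M k k| := by simpa using abs_add_le (M k k) (μ - M k k)
    _ ≤ ∑ j, ‖M k j‖ := by
        rw [← Finset.add_sum_erase _ _ (Finset.mem_univ k), Real.norm_eq_abs]
        gcongr
    _ ≤ ∑ _j : S, ‖M‖ := Finset.sum_le_sum fun j _ => norm_entry_le_entrywise_sup_norm M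
    _ = Fintype.card S * ‖M‖ := by simp

theorem lamMax_le_card_mul_norm (M : Matrix S S ℝ) : lamMax M ≤ Fintype.card S * ‖M‖ := by
  rw [lamMax_eq_sSup_spectrum]
  exact Real.sSup_le (fun μ hμ => (le_abs_self μ).trans (abs_le_card_mul_norm_of_mem_spectrum hμ))
    (by positivity)

open MatrixOrder in
theorem Matrix.IsHermitian.apply_self_le_lamMax {M : Matrix S S ℝ} (hM : M.IsHermitian) (i : S) :
    M i i ≤ lamMax M := by
  have hle : M ≤ algebraMap ℝ _ (lamMax M) := by
    refine le_algebraMap_of_spectrum_le (fun x hx => ?_) hM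
    rw [lamMax_eq_sSup_spectrum]
    exact le_csSup M.finite_spectrum.bddAbove hx
  simpa [algebraMap_matrix_apply] using (Matrix.le_iff.mp hle).diag_nonneg (i := i)

theorem Matrix.PosSemidef.two_mul_abs_apply_le {M : Matrix S S ℝ} (hM : M.PosSemidef) (i j : S) :
    2 * |M i j| ≤ M i i + M j j := by
  have hsymm : M j i = M i j := by simpa using hM.1.apply i j
  have hadd := hM.dotProduct_mulVec_nonneg (Pi.single i 1 + Pi.single j 1)
  have hsub := hM.dotProduct_mulVec_nonneg (Pi.single i 1 - Pi.single j 1)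
  simp only [star_trivial, mulVec_add, mulVec_sub, mulVec_single, MulOpposite.op_one, one_smul,
    dotProduct_add, add_dotProduct, dotProduct_sub, sub_dotProduct, single_dotProduct, col_apply,
    one_mul, hsymm] at hadd hsub
  rcases abs_cases (M i j) with ⟨h, -⟩ | ⟨h, -⟩ <;> linarith

theorem Matrix.PosSemidef.norm_le_lamMax [Nonempty S] {M : Matrix S S ℝ} (hM : M.PosSemidef) :
    ‖M‖ ≤ lamMax M := by
  obtain ⟨s⟩ := ‹Nonempty S›
  refine (norm_le_iff (hM.diag_nonneg.trans (hM.1.apply_self_le_lamMax s))).mpr fun i j => ?_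
  have := hM.two_mul_abs_apply_le i j
  have := hM.1.apply_self_le_lamMax i
  have := hM.1.apply_self_le_lamMax j
  rw [Real.norm_eq_abs]
  linarith

end Spectrum

section EntrywiseSupNorm

variable {l m n α : Type*} [Fintype l] [Fintype m] [Fintype n]

theorem Matrix.norm_mul_le_of_sum_norm_le [NormedRing α] {A : Matrix l m α} {r : ℝ} (hr : 0 ≤ r)
    (hA : ∀ i, ∑ k, ‖A i k‖ ≤ r) (X : Matrix m n α) : ‖A * X‖ ≤ r * ‖X‖ := by
  refine (norm_le_iff (by positivity)).mpr fun i j => ?_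
  calc ‖(A * X) i j‖ ≤ ∑ k, ‖A i k‖ * ‖X k j‖ := by
        rw [mul_apply]
        exact (norm_sum_le _ _).trans (Finset.sum_le_sum fun k _ => norm_mul_le _ _)
    _ ≤ ∑ k, ‖A i k‖ * ‖X‖ := by gcongr; exact norm_entry_le_entrywise_sup_norm X
    _ ≤ r * ‖X‖ := by rw [← Finset.sum_mul]; gcongr; exact hA i

theorem Matrix.norm_mul_mul_transpose_le_of_sum_norm_le [NormedCommRing α]
    {A : Matrix l m α} {r : ℝ} (hr : 0 ≤ r) (hA : ∀ i, ∑ k, ‖A i k‖ ≤ r) (X : Matrix m m α) :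
    ‖A * X * Aᵀ‖ ≤ r ^ 2 * ‖X‖ := by
  have hAXA : A * X * Aᵀ = (A * (A * X)ᵀ)ᵀ := by rw [transpose_mul, transpose_transpose]
  calc ‖A * X * Aᵀ‖ = ‖A * (A * X)ᵀ‖ := by rw [hAXA, norm_transpose]
    _ ≤ r * ‖A * X‖ := by
        rw [← norm_transpose (A * X)]
        exact norm_mul_le_of_sum_norm_le hr hA _
    _ ≤ r * (r * ‖X‖) := by gcongr; exact norm_mul_le_of_sum_norm_le hr hA X
    _ = r ^ 2 * ‖X‖ := by ring

end EntrywiseSupNorm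

theorem le_add_mul_pow_of_le_mul_add {u : ℕ → ℝ} {q c B : ℝ} (hq : 0 ≤ q) (hB₀ : 0 ≤ B)
    (hB : q * B + c ≤ B) (hu : ∀ k, u (k + 1) ≤ q * u k + c) (k : ℕ) :
    u k ≤ B + u 0 * q ^ k := by
  induction k with
  | zero => simpa using hB₀
  | succ k ih =>
    calc u (k + 1) ≤ q * u k + c := hu k
      _ ≤ q * (B + u 0 * q ^ k) + c := by gcongr
      _ ≤ B + u 0 * q ^ (k + 1) := by rw [pow_succ]; linarith

theorem Matrix.norm_le_of_eq_mul_mul_transpose_add_smul {S : Type*} [Fintype S]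
    {A : Matrix S S ℝ} {W X : ℕ → Matrix S S ℝ} {r c w : ℝ} (hr₀ : 0 ≤ r) (hr₁ : r < 1)
    (hA : ∀ i, ∑ j, ‖A i j‖ ≤ r) (hc : 0 ≤ c) (hW : ∀ k, ‖W k‖ ≤ w)
    (hX : ∀ k, X (k + 1) = A * X k * Aᵀ + c • W k) (k : ℕ) :
    ‖X k‖ ≤ c * w / (1 - r) + ‖X 0‖ * r ^ (2 * k) := by
  have hw : 0 ≤ w := (norm_nonneg _).trans (hW 0)
  have hstep (k : ℕ) : ‖X (k + 1)‖ ≤ r ^ 2 * ‖X k‖ + c * w := by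
    rw [hX k]
    refine (norm_add_le _ _).trans
      (add_le_add (norm_mul_mul_transpose_le_of_sum_norm_le hr₀ hA _) ?_)
    rw [norm_smul, Real.norm_of_nonneg hc]
    exact mul_le_mul_of_nonneg_left (hW k) hc
  set B := c * w / (1 - r) with hB
  have hB₀ : 0 ≤ B := div_nonneg (by positivity) (by linarith)
  have hfix : r ^ 2 * B + c * w ≤ B := by
    have : c * w = (1 - r) * B := by rw [hB, mul_div_cancel₀ _ (by linarith)]
    nlinarith [mul_nonneg (mul_nonneg hr₀ (sub_nonneg.2 hr₁.le)) hB₀]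
  rw [pow_mul]
  exact le_add_mul_pow_of_le_mul_add (u := fun k => ‖X k‖) (sq_nonneg r) hB₀ hfix hstep k

section TDIteration

variable {S : Type*} [Fintype S] [DecidableEq S]

def tdIterationMatrix (α γ : ℝ) (d : S → ℝ) (P : Matrix S S ℝ) : Matrix S S ℝ :=
  1 + α • (γ • (diagonal d * P) - diagonal d)

variable {α γ : ℝ} {d : S → ℝ} {P : Matrix S S ℝ}

theorem tdIterationMatrix_apply (i j : S) :
    tdIterationMatrix α γ d P i j = (if i = j then 1 - α * d i else 0) + α * γ * d i * P i j := by
  simp only [tdIterationMatrix, Matrix.add_apply, Matrix.smul_apply, Matrix.sub_apply,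
    diagonal_mul, one_apply, diagonal_apply, smul_eq_mul]
  split_ifs <;> ring

theorem tdIterationMatrix_nonneg (hα : 0 ≤ α) (hγ : 0 ≤ γ) (hd : ∀ s, 0 ≤ d s)
    (hαd : ∀ s, α * d s ≤ 1) (hP : ∀ i j, 0 ≤ P i j) (i j : S) :
    0 ≤ tdIterationMatrix α γ d P i j := by
  rw [tdIterationMatrix_apply]
  have hdiag : 0 ≤ if i = j then 1 - α * d i else 0 := by
    split_ifs
    · linarith [hαd i]
    · exact le_rfl
  have := hP i j
  have := hd i
  positivity

theorem sum_tdIterationMatrix_apply (i : S) (hP : ∑ j, P i j = 1) :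
    ∑ j, tdIterationMatrix α γ d P i j = 1 - α * d i * (1 - γ) := by
  simp only [tdIterationMatrix_apply, Finset.sum_add_distrib, Finset.sum_ite_eq, Finset.mem_univ,
    if_true, ← Finset.mul_sum, hP]
  ring

theorem sum_norm_tdIterationMatrix_apply_le (hα : 0 ≤ α) (hγ₀ : 0 ≤ γ) (hγ₁ : γ ≤ 1)
    (hd : ∀ s, 0 ≤ d s) (hαd : ∀ s, α * d s ≤ 1) (hP₀ : ∀ i j, 0 ≤ P i j) (i : S)
    (hP₁ : ∑ j, P i j = 1) :
    ∑ j, ‖tdIterationMatrix α γ d P i j‖ ≤ 1 - α * (⨅ s, d s) * (1 - γ) := by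
  rw [sum_congr rfl fun j _ => Real.norm_of_nonneg (tdIterationMatrix_nonneg hα hγ₀ hd hαd hP₀ i j),
    sum_tdIterationMatrix_apply i hP₁]
  have := sub_nonneg.2 hγ₁
  gcongr
  exact ciInf_le (Set.finite_range d).bddBelow i

end TDIteration

theorem correlation_iterates_lamMax_bound_general
    {S : Type*} [Fintype S] [Nonempty S] [DecidableEq S]
    (γ α : ℝ) (hγ0 : 0 ≤ γ) (hγ1 : γ < 1) (hα0 : 0 < α) (hα1 : α < 1)
    (d : S → ℝ) (hd : ∀ s, 0 < d s) (hd1 : ∑ s, d s = 1)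
    (P : Matrix S S ℝ) (hP0 : ∀ i j, 0 ≤ P i j) (hP1 : ∀ i, ∑ j, P i j = 1)
    (A : Matrix S S ℝ)
    (hA : A = 1 + α • (γ • (Matrix.diagonal d * P) - Matrix.diagonal d))
    (ρ : ℝ) (hρ : ρ = 1 - α * (⨅ s : S, d s) * (1 - γ))
    (Wmax : ℝ)
    (W : ℕ → Matrix S S ℝ) (hW : ∀ k, (W k).PosSemidef)
    (hWbound : ∀ k, lamMax (W k) ≤ Wmax)
    (X : ℕ → Matrix S S ℝ) (hX0 : (X 0).PosSemidef)
    (hXrec : ∀ k, X (k + 1) = A * X k * Aᵀ + (α ^ 2) • W k) :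
    ∀ k, lamMax (X k) ≤
      α ^ 2 * Wmax * (Fintype.card S : ℝ) / (1 - ρ) +
        (Fintype.card S : ℝ) * lamMax (X 0) * ρ ^ (2 * k) := by
  obtain ⟨s₀, hs₀⟩ := exists_eq_ciInf_of_finite (f := d)
  have hαd (s : S) : α * d s ≤ 1 :=
    (mul_le_of_le_one_left (hd s).le hα1.le).trans (hd1 ▸ single_le_sum (fun i _ => (hd i).le)
      (mem_univ s))
  have hArow (i : S) : ∑ j, ‖A i j‖ ≤ ρ := hA ▸ hρ ▸ sum_norm_tdIterationMatrix_apply_le hα0.le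
    hγ0 hγ1.le (fun s => (hd s).le) hαd hP0 i (hP1 i)
  have hρ₀ : 0 ≤ ρ := (sum_nonneg fun j _ => norm_nonneg _).trans (hArow s₀)
  have hρ₁ : ρ < 1 := by
    rw [hρ, ← hs₀]
    linarith [mul_pos (mul_pos hα0 (hd s₀)) (sub_pos.2 hγ1)]
  have hWnorm (k : ℕ) : ‖W k‖ ≤ Wmax := (hW k).norm_le_lamMax.trans (hWbound k)
  intro k
  calc lamMax (X k) ≤ Fintype.card S * ‖X k‖ := lamMax_le_card_mul_norm _
    _ ≤ Fintype.card S * (α ^ 2 * Wmax / (1 - ρ) + lamMax (X 0) * ρ ^ (2 * k)) := by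
        gcongr
        refine (norm_le_of_eq_mul_mul_transpose_add_smul hρ₀ hρ₁ hArow (sq_nonneg α) hWnorm
          hXrec k).trans ?_
        gcongr
        exact hX0.norm_le_lamMax
    _ = _ := by ring

/-- **Eigenvalue bound of the correlation iterates.**  With `A = I + α(γ D P − D)`,
`ρ = 1 − α·d_min·(1−γ)`, `W_max = 9/(1−γ)²`, a sequence `W k` of symmetric positive
semidefinite matrices with `λ_max(W k) ≤ W_max`, `X 0` symmetric positive semidefinite,
and the recursion `X (k+1) = A (X k) Aᵀ + α² W k`, we have, for all `k`,
`λ_max(X k) ≤ α² W_max n/(1−ρ) + n λ_max(X 0) ρ^{2k}`, where `n = |S|`. -/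
theorem correlation_iterates_lamMax_bound
    {S : Type*} [Fintype S] [Nonempty S] [DecidableEq S]
    (γ α : ℝ) (hγ0 : 0 ≤ γ) (hγ1 : γ < 1) (hα0 : 0 < α) (hα1 : α < 1)
    (d : S → ℝ) (hd : ∀ s, 0 < d s) (hd1 : ∑ s, d s = 1)
    (P : Matrix S S ℝ) (hP0 : ∀ i j, 0 ≤ P i j) (hP1 : ∀ i, ∑ j, P i j = 1)
    (A : Matrix S S ℝ)
    (hA : A = 1 + α • (γ • (Matrix.diagonal d * P) - Matrix.diagonal d))
    (ρ : ℝ) (hρ : ρ = 1 - α * (⨅ s : S, d s) * (1 - γ))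
    (Wmax : ℝ) (hWmax : Wmax = 9 / (1 - γ) ^ 2)
    (W : ℕ → Matrix S S ℝ) (hW : ∀ k, (W k).PosSemidef)
    (hWbound : ∀ k, lamMax (W k) ≤ Wmax)
    (X : ℕ → Matrix S S ℝ) (hX0 : (X 0).PosSemidef)
    (hXrec : ∀ k, X (k + 1) = A * X k * Aᵀ + (α ^ 2) • W k) :
    ∀ k, lamMax (X k) ≤
      α ^ 2 * Wmax * (Fintype.card S : ℝ) / (1 - ρ) +
        (Fintype.card S : ℝ) * lamMax (X 0) * ρ ^ (2 * k) :=
  correlation_iterates_lamMax_bound_general γ α hγ0 hγ1 hα0 hα1 d hd hd1 P hP0 hP1 A hA ρ hρ Wmax W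
    hW hWbound X hX0 hXrec
end

section
/- Under the i.i.d. observation model, the mean error follows the linear dynamics exactly: for every k ≥ 0, E[V_k] − V^π = A^k (V_0 − V^π), where A = I + α(γ D P^π − D). Consequently ‖E[V_k] − V^π‖_∞ ≤ ρ^k ‖V_0 − V^π‖_∞, where ρ = 1 − α·d_min·(1−γ). -/
/-!
The TD iterate `V k` is a deterministic function of the first `k` observations, hence
independent of the observation `X k`. Averaging one update over the law of `X k` with `V k`
frozen, and using that the update is affine in `V k`, shows that the means `m k = E[V k]`
follow the expected update `m ↦ m + α D (R^π + γ P^π m − m)`; by the Bellman equation this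
is `m − V^π ↦ A (m − V^π)`. The matrix `A` has nonnegative entries and row sums
`1 − α d(s) (1 − γ) ≤ ρ`, so it contracts the sup norm by `ρ`.
-/

open Finset Matrix MeasureTheory ProbabilityTheory

theorem norm_mulVec_le_of_nonneg {m n : Type*} [Fintype m] [Fintype n] [Nonempty m]
    {B : Matrix m n ℝ} {ρ : ℝ} (hB : ∀ i j, 0 ≤ B i j) (hρ : ∀ i, ∑ j, B i j ≤ ρ)
    (v : n → ℝ) : ‖B *ᵥ v‖ ≤ ρ * ‖v‖ := by
  refine (pi_norm_le_iff_of_nonempty _).2 fun i => ?_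
  calc ‖(B *ᵥ v) i‖ = |∑ j, B i j * v j| := rfl
    _ ≤ ∑ j, B i j * ‖v‖ := by
      refine (abs_sum_le_sum_abs _ _).trans (sum_le_sum fun j _ => ?_)
      rw [abs_mul, abs_of_nonneg (hB i j)]
      exact mul_le_mul_of_nonneg_left (norm_le_pi_norm v j) (hB i j)
    _ = (∑ j, B i j) * ‖v‖ := (sum_mul _ _ _).symm
    _ ≤ ρ * ‖v‖ := mul_le_mul_of_nonneg_right (hρ i) (norm_nonneg v)

theorem norm_pow_mulVec_le_of_nonneg {n : Type*} [Fintype n] [DecidableEq n] [Nonempty n]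
    {B : Matrix n n ℝ} {ρ : ℝ} (hB : ∀ i j, 0 ≤ B i j) (hρ : ∀ i, ∑ j, B i j ≤ ρ)
    (v : n → ℝ) (k : ℕ) : ‖(B ^ k) *ᵥ v‖ ≤ ρ ^ k * ‖v‖ := by
  have hρ0 : 0 ≤ ρ := (sum_nonneg fun j _ => hB (Classical.arbitrary n) j).trans (hρ _)
  induction k with
  | zero => simp
  | succ k ih =>
    calc ‖(B ^ (k + 1)) *ᵥ v‖ = ‖B *ᵥ ((B ^ k) *ᵥ v)‖ := by rw [pow_succ', mulVec_mulVec]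
      _ ≤ ρ * (ρ ^ k * ‖v‖) :=
        (norm_mulVec_le_of_nonneg hB hρ _).trans (mul_le_mul_of_nonneg_left ih hρ0)
      _ = ρ ^ (k + 1) * ‖v‖ := by ring

theorem integral_sum_smul_dirac {T : Type*} [Fintype T] [MeasurableSpace T]
    [MeasurableSingletonClass T] {w : T → ℝ} (hw : ∀ u, 0 ≤ w u) (g : T → ℝ) :
    ∫ x, g x ∂(∑ u, ENNReal.ofReal (w u) • Measure.dirac u) = ∑ u, w u * g u := by
  rw [integral_finsetSum_measure fun u _ =>
    Integrable.of_finite.smul_measure ENNReal.ofReal_ne_top]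
  simp [integral_smul_measure, hw]

theorem ProbabilityTheory.IndepFun.integral_comp_eq_integral_map {Ω β T : Type*}
    [MeasurableSpace Ω] {μ : Measure Ω} [IsProbabilityMeasure μ]
    [MeasurableSpace β] [Finite β] [MeasurableSingletonClass β]
    [MeasurableSpace T] [Finite T] [MeasurableSingletonClass T]
    {Z : Ω → β} {Y : Ω → T} (h : IndepFun Z Y μ) (hZ : Measurable Z) (hY : Measurable Y)
    (f : β → T → ℝ) :
    ∫ ω, f (Z ω) (Y ω) ∂μ = ∫ y, ∫ ω, f (Z ω) y ∂μ ∂(μ.map Y) := by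
  rw [← integral_map (f := fun p : β × T => f p.1 p.2) (hZ.prodMk hY).aemeasurable
      (measurable_of_finite _).aestronglyMeasurable,
    h.map_prod_eq_prod_map_map hZ.aemeasurable hY.aemeasurable,
    integral_prod_symm _ Integrable.of_finite]
  exact integral_congr_ae (ae_of_all _ fun y =>
    integral_map hZ.aemeasurable (measurable_of_finite _).aestronglyMeasurable)

theorem ProbabilityTheory.iIndepFun.indepFun_fin_of_nat {Ω β : Type*} [MeasurableSpace Ω]
    {μ : Measure Ω} [MeasurableSpace β] {X : ℕ → Ω → β} (h : iIndepFun X μ)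
    (hX : ∀ k, Measurable (X k)) (k : ℕ) :
    IndepFun (fun ω (i : Fin k) => X i ω) (X k) μ := by
  have hψ : Measurable fun g : ({k} : Finset ℕ) → β => g ⟨k, mem_singleton_self k⟩ :=
    measurable_pi_apply _
  exact (h.indepFun_finset (range k) {k} (by simp) hX).comp
    (measurable_pi_lambda (fun g (i : Fin k) => g ⟨i, mem_range.2 i.2⟩)
      fun i => measurable_pi_apply _) hψ

section MeanMatrix

variable {S : Type*} [Fintype S] [DecidableEq S]

def tdMeanMatrix (α γ : ℝ) (d : S → ℝ) (Q : Matrix S S ℝ) : Matrix S S ℝ :=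
  1 + α • (γ • (diagonal d * Q) - diagonal d)

variable {α γ : ℝ} {d : S → ℝ} {Q : Matrix S S ℝ}

theorem tdMeanMatrix_apply (i j : S) :
    tdMeanMatrix α γ d Q i j = (if i = j then 1 - α * d i else 0) + α * γ * d i * Q i j := by
  simp only [tdMeanMatrix, Matrix.add_apply, one_apply, Matrix.smul_apply, Matrix.sub_apply,
    diagonal_mul, diagonal_apply, smul_eq_mul]
  split_ifs <;> ring

theorem tdMeanMatrix_nonneg (hα : 0 ≤ α) (hγ : 0 ≤ γ) (hd : ∀ i, 0 ≤ d i)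
    (hαd : ∀ i, α * d i ≤ 1) (hQ : ∀ i j, 0 ≤ Q i j) (i j : S) :
    0 ≤ tdMeanMatrix α γ d Q i j := by
  rw [tdMeanMatrix_apply]
  have : 0 ≤ α * γ * d i * Q i j := by have := hd i; have := hQ i j; positivity
  split_ifs <;> linarith [hαd i]

theorem sum_tdMeanMatrix_row (hQ : ∀ i, ∑ j, Q i j = 1) (i : S) :
    ∑ j, tdMeanMatrix α γ d Q i j = 1 - α * d i * (1 - γ) := by
  simp only [tdMeanMatrix_apply, sum_add_distrib, sum_ite_eq, mem_univ, if_true, ← mul_sum, hQ]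
  ring

theorem norm_tdMeanMatrix_pow_mulVec_le [Nonempty S] (hα : 0 ≤ α) (hγ0 : 0 ≤ γ) (hγ1 : γ ≤ 1)
    (hd : ∀ i, 0 ≤ d i) (hαd : ∀ i, α * d i ≤ 1) (hQ0 : ∀ i j, 0 ≤ Q i j)
    (hQ1 : ∀ i, ∑ j, Q i j = 1) (v : S → ℝ) (k : ℕ) :
    ‖(tdMeanMatrix α γ d Q ^ k) *ᵥ v‖ ≤ (1 - α * (⨅ i, d i) * (1 - γ)) ^ k * ‖v‖ := by
  refine norm_pow_mulVec_le_of_nonneg (tdMeanMatrix_nonneg hα hγ0 hd hαd hQ0) (fun i => ?_) v k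
  rw [sum_tdMeanMatrix_row hQ1]
  exact sub_le_sub_left (mul_le_mul_of_nonneg_right
    (mul_le_mul_of_nonneg_left (ciInf_le (Finite.bddBelow_range d) i) hα) (sub_nonneg.2 hγ1)) 1

theorem tdMeanMatrix_mulVec_sub {R Vpi : S → ℝ} (hVpi : Vpi = R + γ • Q *ᵥ Vpi) (v : S → ℝ) :
    tdMeanMatrix α γ d Q *ᵥ (v - Vpi) = v + α • diagonal d *ᵥ (R + γ • Q *ᵥ v - v) - Vpi := by
  have hR : R = Vpi - γ • Q *ᵥ Vpi := eq_sub_of_add_eq hVpi.symm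
  simp only [tdMeanMatrix, hR, add_mulVec, sub_mulVec, smul_mulVec, one_mulVec,
    ← mulVec_mulVec, mulVec_sub, mulVec_add, mulVec_smul]
  module

end MeanMatrix

section Policy

variable {S A : Type*}

def policyTransition [Fintype A] (π : S → A → ℝ) (P : S → A → S → ℝ) : Matrix S S ℝ :=
  of fun s s' => ∑ a, π s a * P s a s'

def policyReward [Fintype S] [Fintype A] (π : S → A → ℝ) (P r : S → A → S → ℝ) : S → ℝ :=
  fun s => ∑ a, ∑ s', π s a * P s a s' * r s a s'

theorem policyTransition_nonneg [Fintype A] {π : S → A → ℝ} {P : S → A → S → ℝ}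
    (hπ0 : ∀ s a, 0 ≤ π s a) (hP0 : ∀ s a s', 0 ≤ P s a s') (s s' : S) :
    0 ≤ policyTransition π P s s' :=
  sum_nonneg fun a _ => mul_nonneg (hπ0 s a) (hP0 s a s')

theorem sum_policyTransition_row [Fintype S] [Fintype A] {π : S → A → ℝ} {P : S → A → S → ℝ}
    (hπ1 : ∀ s, ∑ a, π s a = 1) (hP1 : ∀ s a, ∑ s', P s a s' = 1) (s : S) :
    ∑ s', policyTransition π P s s' = 1 := by
  simp only [policyTransition, of_apply]
  rw [sum_comm]
  simp only [← mul_sum, hP1, mul_one, hπ1]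

end Policy

section TDUpdate

variable {S A : Type*} [DecidableEq S]

def tdUpdate (α γ : ℝ) (r : S → A → S → ℝ) (v : S → ℝ) (x : S × A × S) : S → ℝ :=
  fun t => v t + α * (if t = x.1 then 1 else 0) * (r x.1 x.2.1 x.2.2 + γ * v x.2.2 - v x.1)

def tdIterate (α γ : ℝ) (r : S → A → S → ℝ) (V₀ : S → ℝ) :
    (k : ℕ) → (Fin k → S × A × S) → S → ℝ
  | 0, _ => V₀
  | k + 1, h => tdUpdate α γ r (tdIterate α γ r V₀ k (Fin.init h)) (h (Fin.last k))

theorem integral_tdUpdate {Ω : Type*} [MeasurableSpace Ω] {μ : Measure Ω}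
    [IsProbabilityMeasure μ] {V : Ω → S → ℝ} (hV : ∀ s, Integrable (fun ω => V ω s) μ)
    (α γ : ℝ) (r : S → A → S → ℝ) (x : S × A × S) (t : S) :
    ∫ ω, tdUpdate α γ r (V ω) x t ∂μ = tdUpdate α γ r (fun s => ∫ ω, V ω s ∂μ) x t := by
  simp only [tdUpdate]
  have hδ : Integrable (fun ω => r x.1 x.2.1 x.2.2 + γ * V ω x.2.2) μ :=
    (integrable_const _).add ((hV x.2.2).const_mul γ)
  have hinc : Integrable (fun ω => (α * if t = x.1 then 1 else 0) *
      (r x.1 x.2.1 x.2.2 + γ * V ω x.2.2 - V ω x.1)) μ := (hδ.sub (hV x.1)).const_mul _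
  rw [integral_add (hV t) hinc, integral_const_mul,
    integral_sub hδ (hV x.1), integral_add (integrable_const _) ((hV x.2.2).const_mul γ),
    integral_const_mul, integral_const, probReal_univ, one_smul]

theorem sum_smul_tdUpdate [Fintype S] [Fintype A] {π : S → A → ℝ} {P : S → A → S → ℝ}
    {d : S → ℝ} (hπ1 : ∀ s, ∑ a, π s a = 1) (hP1 : ∀ s a, ∑ s', P s a s' = 1)
    (hd1 : ∑ s, d s = 1) (α γ : ℝ) (r : S → A → S → ℝ) (v : S → ℝ) :
    ∑ x : S × A × S, (d x.1 * π x.1 x.2.1 * P x.1 x.2.1 x.2.2) • tdUpdate α γ r v x =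
      v + α • diagonal d *ᵥ (policyReward π P r + γ • policyTransition π P *ᵥ v - v) := by
  have hw : ∑ x : S × A × S, d x.1 * π x.1 x.2.1 * P x.1 x.2.1 x.2.2 = 1 := by
    simp only [Fintype.sum_prod_type, mul_assoc, ← mul_sum, hP1, mul_one, hπ1, hd1]
  have hPv : ∀ s, (policyTransition π P *ᵥ v) s = ∑ a, ∑ s', π s a * P s a s' * v s' :=
    fun s => by
      simp only [policyTransition, mulVec, dotProduct, of_apply, sum_mul]
      exact sum_comm
  funext t
  -- only transitions leaving `t` move coordinate `t`
  have hsplit : ∀ x : S × A × S,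
      d x.1 * π x.1 x.2.1 * P x.1 x.2.1 x.2.2 * tdUpdate α γ r v x t =
        d x.1 * π x.1 x.2.1 * P x.1 x.2.1 x.2.2 * v t + α * if t = x.1 then
          d t * (π t x.2.1 * P t x.2.1 x.2.2 * r t x.2.1 x.2.2 +
            γ * (π t x.2.1 * P t x.2.1 x.2.2 * v x.2.2) - v t * (π t x.2.1 * P t x.2.1 x.2.2))
          else 0 := by
    rintro ⟨s, a, s'⟩
    simp only [tdUpdate]
    split_ifs with h
    · subst h; ring
    · ring
  simp only [Finset.sum_apply, Pi.smul_apply, smul_eq_mul, hsplit, sum_add_distrib, ← sum_mul,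
    hw, one_mul, ← mul_sum]
  rw [Fintype.sum_prod_type, sum_comm]
  simp only [sum_ite_eq, mem_univ, if_true, Fintype.sum_prod_type, Pi.add_apply, Pi.smul_apply,
    mulVec_diagonal, Pi.sub_apply, smul_eq_mul, hPv, policyReward, sum_add_distrib,
    sum_sub_distrib, ← mul_sum, hP1, mul_one, hπ1]

theorem integral_tdIterate_succ [Fintype S] [Fintype A] [MeasurableSpace S]
    [MeasurableSingletonClass S] [MeasurableSpace A] [MeasurableSingletonClass A]
    {Ω : Type*} [MeasurableSpace Ω] {μ : Measure Ω} [IsProbabilityMeasure μ]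
    {X : ℕ → Ω → S × A × S} (hX : ∀ k, Measurable (X k)) (hIndep : iIndepFun X μ)
    {w : S × A × S → ℝ} (hw : ∀ x, 0 ≤ w x) {k : ℕ}
    (hLaw : μ.map (X k) = ∑ x, ENNReal.ofReal (w x) • Measure.dirac x)
    (α γ : ℝ) (r : S → A → S → ℝ) (V₀ : S → ℝ) :
    (fun t => ∫ ω, tdIterate α γ r V₀ (k + 1) (fun i => X i ω) t ∂μ) =
      ∑ x, w x • tdUpdate α γ r (fun s => ∫ ω, tdIterate α γ r V₀ k (fun i => X i ω) s ∂μ) x := by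
  have hhist : Measurable fun ω (i : Fin k) => X i ω := measurable_pi_lambda _ fun i => hX i
  have hint : ∀ s, Integrable (fun ω => tdIterate α γ r V₀ k (fun i => X i ω) s) μ := fun s =>
    (Integrable.of_finite (f := fun h => tdIterate α γ r V₀ k h s)).comp_measurable hhist
  funext t
  calc ∫ ω, tdIterate α γ r V₀ (k + 1) (fun i => X i ω) t ∂μ
      = ∫ ω, tdUpdate α γ r (tdIterate α γ r V₀ k (fun i => X i ω)) (X k ω) t ∂μ := rfl
    _ = ∑ x, w x * ∫ ω, tdUpdate α γ r (tdIterate α γ r V₀ k (fun i => X i ω)) x t ∂μ := by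
      rw [(hIndep.indepFun_fin_of_nat hX k).integral_comp_eq_integral_map hhist (hX k)
        fun h x => tdUpdate α γ r (tdIterate α γ r V₀ k h) x t, hLaw, integral_sum_smul_dirac hw]
    _ = _ := by simp only [integral_tdUpdate hint, Finset.sum_apply, Pi.smul_apply, smul_eq_mul]

end TDUpdate

theorem td_mean_error_dynamics_general
    {S A : Type*} [Fintype S] [Nonempty S] [DecidableEq S] [Fintype A]
    [MeasurableSpace S] [MeasurableSingletonClass S]
    [MeasurableSpace A] [MeasurableSingletonClass A]
    {Ω : Type*} [MeasurableSpace Ω] (μ : Measure Ω) [IsProbabilityMeasure μ]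
    (γ α : ℝ) (hγ0 : 0 ≤ γ) (hγ1 : γ < 1) (hα0 : 0 < α) (hα1 : α < 1)
    (π : S → A → ℝ) (hπ0 : ∀ s a, 0 ≤ π s a) (hπ1 : ∀ s, ∑ a, π s a = 1)
    (P : S → A → S → ℝ) (hP0 : ∀ s a s', 0 ≤ P s a s') (hP1 : ∀ s a, ∑ s', P s a s' = 1)
    (r : S → A → S → ℝ)
    (d : S → ℝ) (hd : ∀ s, 0 < d s) (hd1 : ∑ s, d s = 1)
    (X : ℕ → Ω → S × A × S) (hXmeas : ∀ k, Measurable (X k))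
    (hIndep : iIndepFun X μ)
    (hLaw : ∀ k, μ.map (X k) =
      ∑ t : S × A × S,
        ENNReal.ofReal (d t.1 * π t.1 t.2.1 * P t.1 t.2.1 t.2.2) • Measure.dirac t)
    (Vpi : S → ℝ)
    (hBell : ∀ s, Vpi s = (∑ a, ∑ s', π s a * P s a s' * r s a s') +
      γ * ∑ s', (∑ a, π s a * P s a s') * Vpi s')
    (V₀ : S → ℝ)
    (V : ℕ → Ω → S → ℝ) (hV0 : ∀ ω, V 0 ω = V₀)
    (hVstep : ∀ k ω t, V (k + 1) ω t = V k ω t +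
      α * (if t = (X k ω).1 then 1 else 0) *
        (r (X k ω).1 (X k ω).2.1 (X k ω).2.2 + γ * V k ω (X k ω).2.2 - V k ω (X k ω).1))
    (Amat : Matrix S S ℝ)
    (hAmat : Amat = 1 + α • (γ • (Matrix.diagonal d * Matrix.of fun s s' => ∑ a, π s a * P s a s')
      - Matrix.diagonal d))
    (ρ : ℝ) (hρ : ρ = 1 - α * (⨅ s : S, d s) * (1 - γ)) :
    ∀ k : ℕ,
      ((fun s => ∫ ω, V k ω s ∂μ) - Vpi) = (Amat ^ k).mulVec (V₀ - Vpi) ∧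
      ‖(fun s => ∫ ω, V k ω s ∂μ) - Vpi‖ ≤ ρ ^ k * ‖V₀ - Vpi‖ := by
  replace hAmat : Amat = tdMeanMatrix α γ d (policyTransition π P) := hAmat
  have hV : ∀ k ω, V k ω = tdIterate α γ r V₀ k (fun i => X i ω) := by
    intro k
    induction k with
    | zero => exact hV0
    | succ k ih => intro ω; funext t; rw [hVstep, ih]; rfl
  have hBellman : Vpi = policyReward π P r + γ • policyTransition π P *ᵥ Vpi := by
    funext s
    simpa [policyReward, policyTransition, mulVec, dotProduct] using hBell s
  have hw : ∀ x : S × A × S, 0 ≤ d x.1 * π x.1 x.2.1 * P x.1 x.2.1 x.2.2 := fun x =>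
    mul_nonneg (mul_nonneg (hd x.1).le (hπ0 _ _)) (hP0 _ _ _)
  have herror : ∀ k, (fun s => ∫ ω, V k ω s ∂μ) - Vpi = (Amat ^ k) *ᵥ (V₀ - Vpi) := by
    simp only [hV]
    intro k
    induction k with
    | zero => simp [tdIterate]
    | succ k ih =>
      rw [pow_succ', ← mulVec_mulVec, ← ih, hAmat, integral_tdIterate_succ hXmeas hIndep hw
        (hLaw k), sum_smul_tdUpdate hπ1 hP1 hd1, tdMeanMatrix_mulVec_sub hBellman]
  have hαd : ∀ s, α * d s ≤ 1 := fun s => by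
    have : d s ≤ 1 := hd1 ▸ single_le_sum (fun i _ => (hd i).le) (mem_univ s)
    nlinarith [hd s]
  refine fun k => ⟨herror k, ?_⟩
  rw [herror k, hAmat, hρ]
  exact norm_tdMeanMatrix_pow_mulVec_le hα0.le hγ0 hγ1.le (fun s => (hd s).le) hαd
    (policyTransition_nonneg hπ0 hP0) (sum_policyTransition_row hπ1 hP1) _ k

/-- **Mean dynamics of TD-learning under the i.i.d. observation model.**
The observations `X k = (s_k, a_k, s'_k)` are i.i.d. with joint law
`q(s,a,s') = d(s)·π(a|s)·P(s'|s,a)`; the TD iterates start from a deterministic `V 0 = V₀`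
with `‖V₀‖_∞ ≤ 1` and update
`V (k+1) (s) = V k (s) + α·1{s = s_k}·(r(s_k,a_k,s'_k) + γ V k (s'_k) − V k (s_k))`;
`V^π` solves the Bellman equation.  Then for every `k`, the mean error satisfies
`E[V k] − V^π = A^k (V₀ − V^π)` with `A = I + α(γ D P^π − D)`, and consequently
`‖E[V k] − V^π‖_∞ ≤ ρ^k ‖V₀ − V^π‖_∞` with `ρ = 1 − α·d_min·(1−γ)`
(the norm `‖·‖` on `S → ℝ` is the sup norm). -/
theorem td_mean_error_dynamics
    {S A : Type*} [Fintype S] [Nonempty S] [DecidableEq S] [Fintype A]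
    [MeasurableSpace S] [MeasurableSingletonClass S]
    [MeasurableSpace A] [MeasurableSingletonClass A]
    {Ω : Type*} [MeasurableSpace Ω] (μ : Measure Ω) [IsProbabilityMeasure μ]
    (γ α : ℝ) (hγ0 : 0 ≤ γ) (hγ1 : γ < 1) (hα0 : 0 < α) (hα1 : α < 1)
    (π : S → A → ℝ) (hπ0 : ∀ s a, 0 ≤ π s a) (hπ1 : ∀ s, ∑ a, π s a = 1)
    (P : S → A → S → ℝ) (hP0 : ∀ s a s', 0 ≤ P s a s') (hP1 : ∀ s a, ∑ s', P s a s' = 1)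
    (r : S → A → S → ℝ) (hr : ∀ s a s', |r s a s'| ≤ 1)
    (d : S → ℝ) (hd : ∀ s, 0 < d s) (hd1 : ∑ s, d s = 1)
    (X : ℕ → Ω → S × A × S) (hXmeas : ∀ k, Measurable (X k))
    (hIndep : iIndepFun X μ)
    (hLaw : ∀ k, μ.map (X k) =
      ∑ t : S × A × S,
        ENNReal.ofReal (d t.1 * π t.1 t.2.1 * P t.1 t.2.1 t.2.2) • Measure.dirac t)
    (Vpi : S → ℝ)
    (hBell : ∀ s, Vpi s = (∑ a, ∑ s', π s a * P s a s' * r s a s') +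
      γ * ∑ s', (∑ a, π s a * P s a s') * Vpi s')
    (V₀ : S → ℝ) (hV₀ : ‖V₀‖ ≤ 1)
    (V : ℕ → Ω → S → ℝ) (hV0 : ∀ ω, V 0 ω = V₀)
    (hVstep : ∀ k ω t, V (k + 1) ω t = V k ω t +
      α * (if t = (X k ω).1 then 1 else 0) *
        (r (X k ω).1 (X k ω).2.1 (X k ω).2.2 + γ * V k ω (X k ω).2.2 - V k ω (X k ω).1))
    (Amat : Matrix S S ℝ)
    (hAmat : Amat = 1 + α • (γ • (Matrix.diagonal d * Matrix.of fun s s' => ∑ a, π s a * P s a s')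
      - Matrix.diagonal d))
    (ρ : ℝ) (hρ : ρ = 1 - α * (⨅ s : S, d s) * (1 - γ)) :
    ∀ k : ℕ,
      ((fun s => ∫ ω, V k ω s ∂μ) - Vpi) = (Amat ^ k).mulVec (V₀ - Vpi) ∧
      ‖(fun s => ∫ ω, V k ω s ∂μ) - Vpi‖ ≤ ρ ^ k * ‖V₀ - Vpi‖ :=
  td_mean_error_dynamics_general μ γ α hγ0 hγ1 hα0 hα1 π hπ0 hπ1 P hP0 hP1 r d hd hd1 X hXmeas
    hIndep hLaw Vpi hBell V₀ V hV0 hVstep Amat hAmat ρ hρ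
end

section
/- Let α ∈ (0,1), γ ∈ [0,1), let d : S → ℝ be a probability distribution with d(s) > 0 for all s, D the diagonal matrix of d, P an n×n row-stochastic nonnegative matrix, A = I + α(γ D P − D), and ρ = 1 − α·d_min·(1−γ) with d_min = min_s d(s). Then there exists a symmetric positive definite matrix M (namely M = Σ_{k=0}^∞ (A^k)^T A^k, which converges) such that A^T M A = M − I, λ_min(M) ≥ 1, and λ_max(M) ≤ n/(1−ρ). -/
/-!
The matrix `A` is entrywise nonnegative with row sums `1 - α (1 - γ) d(s) ≤ ρ < 1`,
so it contracts the sup norm by `ρ`, whence `‖A^k v‖₂² ≤ n ρ^(2k) ‖v‖₂²`. Therefore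
`M = ∑ (A^k)ᵀ A^k` converges, and `vᵀ M v = ∑ ‖A^k v‖₂²` lies between `‖v‖₂²`
(the term `k = 0`) and `n / (1 - ρ²) ‖v‖₂² ≤ n / (1 - ρ) ‖v‖₂²`, which bounds every
eigenvalue. Shifting the index of the series gives `Aᵀ M A = M - I`.
-/

open Finset Matrix

/-- The smallest eigenvalue of a real matrix: the infimum of the set of its real
eigenvalues.  For a real symmetric matrix this is the usual `λ_min`. -/
noncomputable def lamMin {S : Type*} [Fintype S] (M : Matrix S S ℝ) : ℝ :=
  sInf {μ : ℝ | ∃ v : S → ℝ, v ≠ 0 ∧ M.mulVec v = μ • v}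

section SupNorm

variable {S : Type*} [Fintype S]

lemma dotProduct_self_nonneg (v : S → ℝ) : 0 ≤ v ⬝ᵥ v :=
  sum_nonneg fun i _ => mul_self_nonneg (v i)

lemma dotProduct_self_pos {v : S → ℝ} (hv : v ≠ 0) : 0 < v ⬝ᵥ v :=
  (dotProduct_self_nonneg v).lt_of_ne' (dotProduct_self_eq_zero.not.2 hv)

lemma abs_dotProduct_le_card_mul_norm_mul_norm (u w : S → ℝ) :
    |u ⬝ᵥ w| ≤ Fintype.card S * (‖u‖ * ‖w‖) := by
  calc |u ⬝ᵥ w| ≤ ∑ i, |u i * w i| := abs_sum_le_sum_abs _ _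
    _ ≤ ∑ _i : S, ‖u‖ * ‖w‖ := by
        gcongr with i
        rw [abs_mul]
        exact mul_le_mul (norm_le_pi_norm u i) (norm_le_pi_norm w i) (abs_nonneg _)
          (norm_nonneg _)
    _ = Fintype.card S * (‖u‖ * ‖w‖) := by simp

lemma sq_norm_le_dotProduct_self (v : S → ℝ) : ‖v‖ ^ 2 ≤ v ⬝ᵥ v := by
  have hsqrt : ‖v‖ ≤ √(v ⬝ᵥ v) := (pi_norm_le_iff_of_nonneg (Real.sqrt_nonneg _)).2 fun i =>
    Real.abs_le_sqrt <| by
      rw [sq]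
      exact single_le_sum (f := fun j => v j * v j) (fun j _ => mul_self_nonneg (v j))
        (mem_univ i)
  calc ‖v‖ ^ 2 ≤ √(v ⬝ᵥ v) ^ 2 := by gcongr
    _ = v ⬝ᵥ v := Real.sq_sqrt (dotProduct_self_nonneg v)

lemma norm_mulVec_le_of_nonneg_of_sum_le {A : Matrix S S ℝ} {r : ℝ} (hr : 0 ≤ r)
    (hA : ∀ i j, 0 ≤ A i j) (hrow : ∀ i, ∑ j, A i j ≤ r) (v : S → ℝ) :
    ‖A *ᵥ v‖ ≤ r * ‖v‖ := by
  refine (pi_norm_le_iff_of_nonneg (by positivity)).2 fun i => ?_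
  calc ‖(A *ᵥ v) i‖ ≤ ∑ j, |A i j * v j| := abs_sum_le_sum_abs _ _
    _ ≤ ∑ j, A i j * ‖v‖ := by
        gcongr with j
        rw [abs_mul, abs_of_nonneg (hA i j)]
        exact mul_le_mul_of_nonneg_left (norm_le_pi_norm v j) (hA i j)
    _ = (∑ j, A i j) * ‖v‖ := (sum_mul ..).symm
    _ ≤ r * ‖v‖ := by gcongr; exact hrow i

end SupNorm

section Contraction

variable {S : Type*} [Fintype S] [DecidableEq S] {A : Matrix S S ℝ} {r : ℝ}

lemma norm_pow_mulVec_le (hr : 0 ≤ r) (hA : ∀ v, ‖A *ᵥ v‖ ≤ r * ‖v‖) (k : ℕ) (v : S → ℝ) :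
    ‖A ^ k *ᵥ v‖ ≤ r ^ k * ‖v‖ := by
  induction k generalizing v with
  | zero => simp
  | succ k ih =>
    calc ‖A ^ (k + 1) *ᵥ v‖ = ‖A ^ k *ᵥ (A *ᵥ v)‖ := by rw [pow_succ, mulVec_mulVec]
      _ ≤ r ^ k * (r * ‖v‖) := (ih _).trans (by gcongr; exact hA v)
      _ = r ^ (k + 1) * ‖v‖ := by ring

lemma dotProduct_pow_mulVec_self_le (hr : 0 ≤ r) (hA : ∀ v, ‖A *ᵥ v‖ ≤ r * ‖v‖)
    (k : ℕ) (v : S → ℝ) :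
    (A ^ k *ᵥ v) ⬝ᵥ (A ^ k *ᵥ v) ≤ Fintype.card S * (r ^ 2) ^ k * (v ⬝ᵥ v) := by
  calc (A ^ k *ᵥ v) ⬝ᵥ (A ^ k *ᵥ v)
        ≤ Fintype.card S * (‖A ^ k *ᵥ v‖ * ‖A ^ k *ᵥ v‖) :=
        (le_abs_self _).trans (abs_dotProduct_le_card_mul_norm_mul_norm _ _)
    _ ≤ Fintype.card S * ((r ^ k * ‖v‖) * (r ^ k * ‖v‖)) := by
        have := norm_pow_mulVec_le hr hA k v
        gcongr
    _ = Fintype.card S * (r ^ 2) ^ k * ‖v‖ ^ 2 := by ring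
    _ ≤ Fintype.card S * (r ^ 2) ^ k * (v ⬝ᵥ v) := by
        gcongr
        exact sq_norm_le_dotProduct_self v

lemma summable_transpose_pow_mul_pow (hr0 : 0 ≤ r) (hr1 : r < 1)
    (hA : ∀ v, ‖A *ᵥ v‖ ≤ r * ‖v‖) : Summable fun k : ℕ => (A ^ k)ᵀ * A ^ k := by
  have hgeom : Summable fun k : ℕ => Fintype.card S * (r ^ 2) ^ k :=
    (summable_geometric_of_lt_one (by positivity) (by nlinarith)).mul_left _
  refine Pi.summable.2 fun i => Pi.summable.2 fun j => hgeom.of_norm_bounded fun k => ?_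
  have hcol : ∀ i, ‖(A ^ k).col i‖ ≤ r ^ k := fun i => by
    simpa [Pi.norm_single] using norm_pow_mulVec_le hr0 hA k (Pi.single i (1 : ℝ))
  calc ‖((A ^ k)ᵀ * A ^ k) i j‖ = |(A ^ k).col i ⬝ᵥ (A ^ k).col j| := by
        rw [mul_apply', Real.norm_eq_abs]; rfl
    _ ≤ Fintype.card S * (r ^ k * r ^ k) :=
        (abs_dotProduct_le_card_mul_norm_mul_norm _ _).trans (by gcongr <;> apply hcol)
    _ = Fintype.card S * (r ^ 2) ^ k := by ring

end Contraction

section Lyapunov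

variable {S : Type*} [Fintype S] [DecidableEq S]

noncomputable def lyapunovSum (A : Matrix S S ℝ) : Matrix S S ℝ :=
  ∑' k : ℕ, (A ^ k)ᵀ * A ^ k

lemma isHermitian_lyapunovSum (A : Matrix S S ℝ) : (lyapunovSum A).IsHermitian := by
  rw [IsHermitian, conjTranspose_eq_transpose_of_trivial, lyapunovSum, transpose_tsum]
  simp

variable {A : Matrix S S ℝ}

lemma transpose_mul_lyapunovSum_mul (hs : Summable fun k : ℕ => (A ^ k)ᵀ * A ^ k) :
    Aᵀ * lyapunovSum A * A = lyapunovSum A - 1 := by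
  have hshift : Aᵀ * lyapunovSum A * A = ∑' k : ℕ, (A ^ (k + 1))ᵀ * A ^ (k + 1) := by
    rw [lyapunovSum, ← hs.tsum_mul_left, ← (hs.mul_left Aᵀ).tsum_mul_right]
    simp only [pow_succ, transpose_mul, Matrix.mul_assoc]
  rw [hshift, lyapunovSum, hs.tsum_eq_zero_add]
  simp

lemma hasSum_dotProduct_lyapunovSum_mulVec (hs : Summable fun k : ℕ => (A ^ k)ᵀ * A ^ k)
    (v : S → ℝ) :
    HasSum (fun k : ℕ => (A ^ k *ᵥ v) ⬝ᵥ (A ^ k *ᵥ v)) (v ⬝ᵥ lyapunovSum A *ᵥ v) := by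
  let q : Matrix S S ℝ →+ ℝ :=
    AddMonoidHom.mk' (fun X => v ⬝ᵥ X *ᵥ v) fun X Y => by simp [add_mulVec, dotProduct_add]
  have hq : Continuous q :=
    continuous_const.dotProduct (continuous_id.matrix_mulVec continuous_const)
  convert hs.hasSum.map q hq using 1
  · ext k
    simp only [Function.comp_apply, q, AddMonoidHom.mk'_apply]
    rw [← mulVec_mulVec, dotProduct_mulVec v, vecMul_transpose]
  · rfl

lemma dotProduct_self_le_dotProduct_lyapunovSum_mulVec
    (hs : Summable fun k : ℕ => (A ^ k)ᵀ * A ^ k) (v : S → ℝ) :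
    v ⬝ᵥ v ≤ v ⬝ᵥ lyapunovSum A *ᵥ v := by
  simpa using le_hasSum (hasSum_dotProduct_lyapunovSum_mulVec hs v) 0
    fun k _ => dotProduct_self_nonneg _

lemma posDef_lyapunovSum (hs : Summable fun k : ℕ => (A ^ k)ᵀ * A ^ k) :
    (lyapunovSum A).PosDef :=
  .of_dotProduct_mulVec_pos (isHermitian_lyapunovSum A) fun v hv => by
    simpa only [star_trivial] using
      (dotProduct_self_pos hv).trans_le
        (dotProduct_self_le_dotProduct_lyapunovSum_mulVec hs v)

lemma dotProduct_lyapunovSum_mulVec_le {r : ℝ} (hr0 : 0 ≤ r) (hr1 : r < 1)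
    (hA : ∀ v, ‖A *ᵥ v‖ ≤ r * ‖v‖) (v : S → ℝ) :
    v ⬝ᵥ lyapunovSum A *ᵥ v ≤ Fintype.card S / (1 - r ^ 2) * (v ⬝ᵥ v) := by
  have hgeom := (hasSum_geometric_of_lt_one (sq_nonneg r) (by nlinarith)).mul_left
    (Fintype.card S * (v ⬝ᵥ v))
  refine hasSum_le (fun k => ?_)
    (hasSum_dotProduct_lyapunovSum_mulVec (summable_transpose_pow_mul_pow hr0 hr1 hA) v)
    hgeom |>.trans_eq (by ring)
  linarith [dotProduct_pow_mulVec_self_le hr0 hA k v]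

end Lyapunov

section Eigenvalues

variable {S : Type*} [Fintype S] {M : Matrix S S ℝ}

lemma Matrix.IsHermitian.exists_eigenvector [Nonempty S] (hM : M.IsHermitian) :
    ∃ μ : ℝ, ∃ v : S → ℝ, v ≠ 0 ∧ M *ᵥ v = μ • v := by
  classical
  let i : S := Classical.arbitrary S
  exact ⟨_, _, (WithLp.ofLp_eq_zero 2).ne.2 <| hM.eigenvectorBasis.orthonormal.ne_zero i,
    hM.mulVec_eigenvectorBasis i⟩

lemma dotProduct_mulVec_of_mulVec_eq_smul {μ : ℝ} {v : S → ℝ} (h : M *ᵥ v = μ • v) :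
    v ⬝ᵥ M *ᵥ v = μ * (v ⬝ᵥ v) := by
  rw [h, dotProduct_smul, smul_eq_mul]

lemma le_lamMin_of_forall_le_dotProduct_mulVec [Nonempty S] (hM : M.IsHermitian) {c : ℝ}
    (h : ∀ v, c * (v ⬝ᵥ v) ≤ v ⬝ᵥ M *ᵥ v) : c ≤ lamMin M := by
  refine le_csInf hM.exists_eigenvector ?_
  rintro μ ⟨v, hv, hMv⟩
  have := h v
  rw [dotProduct_mulVec_of_mulVec_eq_smul hMv] at this
  exact le_of_mul_le_mul_right this (dotProduct_self_pos hv)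

lemma lamMax_le_of_forall_dotProduct_mulVec_le [Nonempty S] (hM : M.IsHermitian) {c : ℝ}
    (h : ∀ v, v ⬝ᵥ M *ᵥ v ≤ c * (v ⬝ᵥ v)) : lamMax M ≤ c := by
  refine csSup_le hM.exists_eigenvector ?_
  rintro μ ⟨v, hv, hMv⟩
  have := h v
  rw [dotProduct_mulVec_of_mulVec_eq_smul hMv] at this
  exact le_of_mul_le_mul_right this (dotProduct_self_pos hv)

end Eigenvalues

section TDSystemMatrix

variable {S : Type*} [Fintype S] [DecidableEq S]

noncomputable def tdSystemMatrix (α γ : ℝ) (d : S → ℝ) (P : Matrix S S ℝ) : Matrix S S ℝ :=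
  1 + α • (γ • (diagonal d * P) - diagonal d)

variable {α γ : ℝ} {d : S → ℝ} {P : Matrix S S ℝ}

lemma tdSystemMatrix_apply (i j : S) :
    tdSystemMatrix α γ d P i j = (if i = j then 1 - α * d i else 0) + α * γ * d i * P i j := by
  simp only [tdSystemMatrix, Matrix.add_apply, Matrix.smul_apply, Matrix.sub_apply, one_apply,
    diagonal_apply, diagonal_mul, smul_eq_mul]
  split_ifs <;> ring

lemma tdSystemMatrix_nonneg (hα : 0 ≤ α) (hγ : 0 ≤ γ) (hd : ∀ i, 0 ≤ d i)
    (hαd : ∀ i, α * d i ≤ 1) (hP : ∀ i j, 0 ≤ P i j) (i j : S) :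
    0 ≤ tdSystemMatrix α γ d P i j := by
  rw [tdSystemMatrix_apply]
  have : 0 ≤ α * γ * d i * P i j := mul_nonneg (mul_nonneg (mul_nonneg hα hγ) (hd i)) (hP i j)
  split_ifs <;> linarith [hαd i]

lemma sum_tdSystemMatrix_apply (hP : ∀ i, ∑ j, P i j = 1) (i : S) :
    ∑ j, tdSystemMatrix α γ d P i j = 1 - α * (1 - γ) * d i := by
  simp only [tdSystemMatrix_apply, sum_add_distrib, sum_ite_eq, mem_univ, if_true,
    ← mul_sum, hP i]
  ring

end TDSystemMatrix

/-- **Existence of a Lyapunov matrix for the TD system matrix.**  Let `α ∈ (0,1)`,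
`γ ∈ [0,1)`, `d` a probability distribution on the finite nonempty state space `S` with
`d(s) > 0` for all `s`, `D = diag(d)`, `P` a row-stochastic matrix with nonnegative
entries, `A = I + α(γ D P − D)`, and `ρ = 1 − α·d_min·(1−γ)` with `d_min = min_s d(s)`.
Then there exists a symmetric positive definite matrix `M` — namely
`M = ∑_{k=0}^∞ (A^k)ᵀ A^k`, which converges — such that `Aᵀ M A = M − I`,
`λ_min(M) ≥ 1` and `λ_max(M) ≤ n/(1−ρ)`, where `n = |S|`. -/
theorem td_lyapunov_matrix_exists
    {S : Type*} [Fintype S] [Nonempty S] [DecidableEq S]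
    (γ α : ℝ) (hγ0 : 0 ≤ γ) (hγ1 : γ < 1) (hα0 : 0 < α) (hα1 : α < 1)
    (d : S → ℝ) (hd : ∀ s, 0 < d s) (hd1 : ∑ s, d s = 1)
    (P : Matrix S S ℝ) (hP0 : ∀ i j, 0 ≤ P i j) (hP1 : ∀ i, ∑ j, P i j = 1)
    (A : Matrix S S ℝ)
    (hA : A = 1 + α • (γ • (Matrix.diagonal d * P) - Matrix.diagonal d))
    (ρ : ℝ) (hρ : ρ = 1 - α * (⨅ s : S, d s) * (1 - γ)) :
    ∃ M : Matrix S S ℝ,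
      M.PosDef ∧
      Summable (fun k : ℕ => (A ^ k)ᵀ * (A ^ k)) ∧
      M = ∑' k : ℕ, (A ^ k)ᵀ * (A ^ k) ∧
      Aᵀ * M * A = M - 1 ∧
      1 ≤ lamMin M ∧
      lamMax M ≤ (Fintype.card S : ℝ) / (1 - ρ) := by
  obtain rfl : A = tdSystemMatrix α γ d P := hA
  obtain ⟨s₀, hs₀⟩ := exists_eq_ciInf_of_finite (f := d)
  rw [← hs₀] at hρ
  have hd_le_one (s : S) : d s ≤ 1 := hd1 ▸ single_le_sum (fun i _ => (hd i).le) (mem_univ s)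
  have hA0 := tdSystemMatrix_nonneg hα0.le hγ0 (fun s => (hd s).le)
    (fun s => by nlinarith [hd s, hd_le_one s]) hP0
  have hrow (s : S) : ∑ j, tdSystemMatrix α γ d P s j ≤ ρ := by
    have : d s₀ ≤ d s := hs₀ ▸ ciInf_le (Set.finite_range d).bddBelow s
    rw [sum_tdSystemMatrix_apply hP1, hρ]
    nlinarith [mul_pos hα0 (sub_pos.2 hγ1)]
  have hρ0 : 0 ≤ ρ := (sum_nonneg fun j _ => hA0 s₀ j).trans (hrow s₀)
  have hρ1 : ρ < 1 := by rw [hρ]; nlinarith [mul_pos (mul_pos hα0 (hd s₀)) (sub_pos.2 hγ1)]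
  have hA_contr := norm_mulVec_le_of_nonneg_of_sum_le hρ0 hA0 hrow
  have hs := summable_transpose_pow_mul_pow hρ0 hρ1 hA_contr
  have hbound : (Fintype.card S : ℝ) / (1 - ρ ^ 2) ≤ Fintype.card S / (1 - ρ) :=
    div_le_div_of_nonneg_left (Nat.cast_nonneg _) (by linarith) (by nlinarith)
  refine ⟨lyapunovSum _, posDef_lyapunovSum hs, hs, rfl, transpose_mul_lyapunovSum_mul hs,
    le_lamMin_of_forall_le_dotProduct_mulVec (isHermitian_lyapunovSum _) fun v => ?_,
    lamMax_le_of_forall_dotProduct_mulVec_le (isHermitian_lyapunovSum _) fun v => ?_⟩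
  · simpa using dotProduct_self_le_dotProduct_lyapunovSum_mulVec hs v
  · exact (dotProduct_lyapunovSum_mulVec_le hρ0 hρ1 hA_contr v).trans
      (by gcongr; exact dotProduct_self_nonneg v)
end
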